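/- arXiv:1701.07339 — 11 statements merged into one kernel-verified Lean document; each statement's English description precedes it below -/
import Mathlib

section
/- Let A, B, C be three affinely independent points in the Euclidean plane. If the distance sum function V is constant on the convex hull of {A, B, C} (i.e. V(P) = V(Q) for all P, Q in the triangle), then the triangle is equilateral: dist A B = dist B C = dist C A. -/
noncomputable section

/-- The point `(x, y)` of the Euclidean plane `ℝ²`. -/
def pt (x y : ℝ) : EuclideanSpace ℝ (Fin 2) :=
  (WithLp.equiv 2 (Fin 2 → ℝ)).symm ![x, y]

/-- The line through `X` and `Y`, i.e. the affine span of `{X, Y}`, as a set. -/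
def lineThrough (X Y : EuclideanSpace ℝ (Fin 2)) : Set (EuclideanSpace ℝ (Fin 2)) :=
  (affineSpan ℝ {X, Y} : AffineSubspace ℝ (EuclideanSpace ℝ (Fin 2)))

/-- The distance sum function of the triangle `ABC`:
`V(P) = dist(P, line BC) + dist(P, line CA) + dist(P, line AB)`. -/
def vSum (A B C P : EuclideanSpace ℝ (Fin 2)) : ℝ :=
  Metric.infDist P (lineThrough B C) + Metric.infDist P (lineThrough C A) +
    Metric.infDist P (lineThrough A B)

/-- The squared-distance sum function of the triangle `ABC`:
`W(P) = dist(P, line BC)² + dist(P, line CA)² + dist(P, line AB)²`. -/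
def wSum (A B C P : EuclideanSpace ℝ (Fin 2)) : ℝ :=
  Metric.infDist P (lineThrough B C) ^ 2 + Metric.infDist P (lineThrough C A) ^ 2 +
    Metric.infDist P (lineThrough A B) ^ 2

/-!
At a vertex the two lines through it contribute nothing, so `V` takes the value of the
opposite height there; constancy of `V` makes the three heights equal. The height from `A` is
`dist B A * sin B` and the height from `C` is `dist A C * sin A`; by the law of sines the latter
equals `dist B C * sin B`, so equal heights give `dist B A = dist B C`.
-/

open Metric InnerProductGeometry EuclideanGeometry

section InnerProductSpace

variable {V P : Type*} [NormedAddCommGroup V] [InnerProductSpace ℝ V] [MetricSpace P]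
  [NormedAddTorsor V P]

lemma norm_sub_smul_sq_mul_norm_sq (u v : V) (r : ℝ) :
    ‖u - r • v‖ ^ 2 * ‖v‖ ^ 2 =
      (‖u‖ * Real.sin (angle u v) * ‖v‖) ^ 2 + (r * ‖v‖ ^ 2 - inner ℝ u v) ^ 2 := by
  have hsin : (‖u‖ * Real.sin (angle u v) * ‖v‖) ^ 2 = ‖u‖ ^ 2 * ‖v‖ ^ 2 - inner ℝ u v ^ 2 := by
    rw [show ‖u‖ * Real.sin (angle u v) * ‖v‖ = Real.sin (angle u v) * (‖u‖ * ‖v‖) by ring,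
      sin_angle_mul_norm_mul_norm, Real.sq_sqrt]
    · simp only [real_inner_self_eq_norm_sq]; ring
    · nlinarith [real_inner_mul_inner_self_le u v]
  rw [hsin, norm_sub_sq_real, norm_smul, real_inner_smul_right, Real.norm_eq_abs, mul_pow, sq_abs]
  ring

theorem infDist_affineSpan_pair_eq_dist_mul_sin_angle {p x y : P} (hxy : x ≠ y) :
    infDist p (line[ℝ, x, y]) = dist x p * Real.sin (∠ p x y) := by
  set v := y -ᵥ x
  have hv : 0 < ‖v‖ := norm_pos_iff.2 (vsub_ne_zero.2 hxy.symm)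
  have hdist : ∀ r : ℝ, dist p (AffineMap.lineMap x y r) ^ 2 * ‖v‖ ^ 2 =
      (dist x p * Real.sin (∠ p x y) * ‖v‖) ^ 2 + (r * ‖v‖ ^ 2 - inner ℝ (p -ᵥ x) v) ^ 2 := by
    intro r
    rw [dist_eq_norm_vsub V, AffineMap.lineMap_apply, vsub_vadd_eq_vsub_sub, dist_comm,
      dist_eq_norm_vsub V, EuclideanGeometry.angle, norm_sub_smul_sq_mul_norm_sq]
  have hh : 0 ≤ dist x p * Real.sin (∠ p x y) := mul_nonneg dist_nonneg (sin_angle_nonneg _ _)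
  refine le_antisymm ?_ ((le_infDist ⟨x, left_mem_affineSpan_pair ℝ x y⟩).2 fun q hq => ?_)
  · set t := inner ℝ (p -ᵥ x) v / ‖v‖ ^ 2
    have ht := hdist t
    rw [div_mul_cancel₀ _ (by positivity), sub_self, zero_pow two_ne_zero, add_zero, mul_pow] at ht
    rw [← (pow_left_inj₀ dist_nonneg hh two_ne_zero).1 (mul_right_cancel₀ (by positivity) ht)]
    exact infDist_le_dist_of_mem (AffineMap.lineMap_mem_affineSpan_pair t x y)
  · obtain ⟨r, rfl⟩ := mem_affineSpan_pair_iff_exists_lineMap_eq.1 hq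
    have hr : (dist x p * Real.sin (∠ p x y)) ^ 2 * ‖v‖ ^ 2 ≤
        dist p (AffineMap.lineMap x y r) ^ 2 * ‖v‖ ^ 2 := by
      rw [hdist, ← mul_pow]
      exact le_add_of_nonneg_right (sq_nonneg (r * ‖v‖ ^ 2 - inner ℝ (p -ᵥ x) v))
    exact (pow_le_pow_iff_left₀ hh dist_nonneg two_ne_zero).1
      (le_of_mul_le_mul_right hr (by positivity))

lemma dist_eq_dist_of_dist_mul_sin_angle_eq {a b c : P} (h : ¬Collinear ℝ ({a, b, c} : Set P))
    (hh : dist b a * Real.sin (∠ a b c) = dist a c * Real.sin (∠ c a b)) :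
    dist b a = dist b c := by
  have hsin := law_sin a b c
  rw [dist_comm c a] at hsin
  exact mul_right_cancel₀ (sin_pos_of_not_collinear h).ne' (by linarith)

end InnerProductSpace

lemma vSum_rotate (A B C P : EuclideanSpace ℝ (Fin 2)) : vSum B C A P = vSum A B C P := by
  unfold vSum
  ring

lemma vSum_self_left {A B C : EuclideanSpace ℝ (Fin 2)} (hBC : B ≠ C) :
    vSum A B C A = dist B A * Real.sin (∠ A B C) := by
  rw [vSum, lineThrough, lineThrough, lineThrough,
    infDist_zero_of_mem (right_mem_affineSpan_pair ℝ C A),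
    infDist_zero_of_mem (left_mem_affineSpan_pair ℝ A B),
    infDist_affineSpan_pair_eq_dist_mul_sin_angle hBC, add_zero, add_zero]

/-- If the distance sum function is constant on the triangle, then the triangle is
equilateral. -/
theorem stmt_1 (A B C : EuclideanSpace ℝ (Fin 2))
    (hind : AffineIndependent ℝ ![A, B, C])
    (hconst : ∀ P ∈ convexHull ℝ ({A, B, C} : Set (EuclideanSpace ℝ (Fin 2))),
      ∀ Q ∈ convexHull ℝ ({A, B, C} : Set (EuclideanSpace ℝ (Fin 2))),
        vSum A B C P = vSum A B C Q) :
    dist A B = dist B C ∧ dist B C = dist C A := by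
  have hABC : ¬Collinear ℝ ({A, B, C} : Set (EuclideanSpace ℝ (Fin 2))) :=
    affineIndependent_iff_not_collinear_set.1 hind
  have hBCA : ¬Collinear ℝ ({B, C, A} : Set (EuclideanSpace ℝ (Fin 2))) := by
    rwa [Set.pair_comm, Set.insert_comm]
  have hCAB : ¬Collinear ℝ ({C, A, B} : Set (EuclideanSpace ℝ (Fin 2))) := by
    rwa [Set.insert_comm, Set.pair_comm]
  have hVA : vSum A B C A = _ := vSum_self_left (ne₂₃_of_not_collinear hABC)
  have hVB : vSum A B C B = _ :=
    (vSum_rotate A B C B).symm.trans (vSum_self_left (ne₂₃_of_not_collinear hBCA))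
  have hVC : vSum A B C C = _ :=
    (vSum_rotate C A B C).trans (vSum_self_left (ne₂₃_of_not_collinear hCAB))
  have hV : ∀ X Y, X ∈ ({A, B, C} : Set _) → Y ∈ ({A, B, C} : Set _) →
      vSum A B C X = vSum A B C Y := fun X Y hX hY =>
    hconst X (subset_convexHull ℝ _ hX) Y (subset_convexHull ℝ _ hY)
  have hBA_BC : dist B A = dist B C :=
    dist_eq_dist_of_dist_mul_sin_angle_eq hABC (hVA ▸ hVC ▸ hV A C (by simp) (by simp))
  have hCB_CA : dist C B = dist C A :=
    dist_eq_dist_of_dist_mul_sin_angle_eq hBCA (hVB ▸ hVA ▸ hV B A (by simp) (by simp))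
  exact ⟨dist_comm A B ▸ hBA_BC, dist_comm B C ▸ hCB_CA⟩
end
end

section
/- Let A, B, C be three affinely independent points in the Euclidean plane. If there exist three affinely independent (non-collinear) points P₁, P₂, P₃ in the convex hull of {A, B, C} at which the distance sum function V takes the same value (V(P₁) = V(P₂) = V(P₃)), then the triangle is equilateral: dist A B = dist B C = dist C A. -/
noncomputable section

/-!
On the triangle, the distance to each side line equals the signed distance to that line measured
towards the opposite vertex, which is an affine function of the point. Hence `vSum` agrees on the
triangle with an affine function; being equal at three affinely independent points of the plane,
that function is constant, so the three heights `vSum A B C A`, `vSum A B C B`, `vSum A B C C`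
coincide. As height times base is twice the area (an area form computation), the sides are equal.
-/

open EuclideanGeometry Module

section SignedInfDist

variable {V P : Type*} [NormedAddCommGroup V] [InnerProductSpace ℝ V] [MetricSpace P]
  [NormedAddTorsor V P]

lemma AffineSubspace.abs_signedInfDist_eq_infDist {s : AffineSubspace ℝ P} [Nonempty s]
    [s.direction.HasOrthogonalProjection] {p x : P}
    (h : x ∈ affineSpan ℝ (insert p (s : Set P))) :
    |s.signedInfDist p x| = Metric.infDist x s := by
  rw [abs_signedInfDist_eq_dist_of_mem_affineSpan_insert h, dist_orthogonalProjection_eq_infDist]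

lemma AffineSubspace.signedInfDist_nonneg_of_mem_convexHull {s : AffineSubspace ℝ V}
    [Nonempty s] [s.direction.HasOrthogonalProjection] {p x : V}
    (h : x ∈ convexHull ℝ (insert p (s : Set V))) :
    0 ≤ s.signedInfDist p x := by
  refine convexHull_min ?_ ((convex_Ici 0).affine_preimage (s.signedInfDist p).toAffineMap) h
  rintro y (rfl | hy)
  · simp
  · simp [signedInfDist_apply_of_mem p hy]

lemma infDist_affineSpan_pair_eq_signedInfDist {a b c x : V}
    (hx : x ∈ convexHull ℝ {a, b, c}) :
    Metric.infDist x (affineSpan ℝ {b, c}) = (affineSpan ℝ {b, c}).signedInfDist a x := by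
  have hx' : x ∈ convexHull ℝ (insert a (affineSpan ℝ {b, c} : Set V)) :=
    convexHull_mono (Set.insert_subset_insert (subset_affineSpan ℝ _)) hx
  rw [← AffineSubspace.abs_signedInfDist_eq_infDist, abs_of_nonneg
    (AffineSubspace.signedInfDist_nonneg_of_mem_convexHull hx')]
  rw [affineSpan_insert_affineSpan]
  exact convexHull_subset_affineSpan _ hx

end SignedInfDist

lemma AffineMap.eq_const_of_affineIndependent {k V P V₂ P₂ ι : Type*} [DivisionRing k]
    [AddCommGroup V] [Module k V] [AddTorsor V P] [AddCommGroup V₂] [Module k V₂]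
    [AddTorsor V₂ P₂] [FiniteDimensional k V] [Fintype ι] {p : ι → P}
    (hp : AffineIndependent k p) (hcard : Fintype.card ι = finrank k V + 1) {f : P →ᵃ[k] P₂}
    {q : P₂} (hf : ∀ i, f (p i) = q) : f = AffineMap.const k P q :=
  AffineMap.ext_on (hp.affineSpan_eq_top_iff_card_eq_finrank_add_one.2 hcard)
    (by rintro _ ⟨i, rfl⟩; exact hf i)

section TwoDim

variable {V : Type*} [NormedAddCommGroup V] [InnerProductSpace ℝ V] [Fact (finrank ℝ V = 2)]

lemma Orientation.infDist_affineSpan_pair_mul_dist (o : Orientation ℝ V (Fin 2)) (b c p : V) :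
    Metric.infDist p (affineSpan ℝ {b, c}) * dist b c = |o.areaForm (c - b) (p - b)| := by
  set L := affineSpan ℝ ({b, c} : Set V)
  set q : V := (orthogonalProjection L p : V)
  obtain ⟨t, ht⟩ : ∃ t : ℝ, t • (c - b) = q - b := by
    have : q -ᵥ b ∈ L.direction := AffineSubspace.vsub_mem_direction
      (orthogonalProjection_mem p) (left_mem_affineSpan_pair ℝ b c)
    rwa [direction_affineSpan, vectorSpan_pair_rev, Submodule.mem_span_singleton] at this
  have horth : inner ℝ (c - b) (p - q) = 0 := by
    refine Submodule.inner_right_of_mem_orthogonal ?_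
      (vsub_orthogonalProjection_mem_direction_orthogonal L p)
    rw [direction_affineSpan, vectorSpan_pair_rev]
    exact Submodule.mem_span_singleton_self _
  have hpb : p - b = (p - q) + t • (c - b) := by rw [ht]; abel
  rw [← dist_orthogonalProjection_eq_infDist, hpb, map_add, map_smul, o.areaForm_apply_self,
    smul_zero, add_zero, o.abs_areaForm_of_orthogonal horth, dist_eq_norm, dist_eq_norm', mul_comm]

lemma Orientation.areaForm_sub_sub_rotate (o : Orientation ℝ V (Fin 2)) (a b c : V) :
    o.areaForm (a - c) (b - c) = o.areaForm (c - b) (a - b) := by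
  have h₁ : a - c = (a - b) - (c - b) := by abel
  have h₂ : b - c = -(c - b) := by abel
  rw [h₁, h₂, map_sub, LinearMap.sub_apply, map_neg, map_neg, o.areaForm_apply_self, neg_zero,
    sub_zero, o.areaForm_swap, neg_neg]

lemma dist_eq_dist_of_infDist_eq {a b c : V} (ha : a ∉ affineSpan ℝ {b, c})
    (h : Metric.infDist a (affineSpan ℝ {b, c}) = Metric.infDist b (affineSpan ℝ {c, a})) :
    dist b c = dist c a := by
  have := FiniteDimensional.of_fact_finrank_eq_two (K := ℝ) (V := V)
  let o : Orientation ℝ V (Fin 2) := (Module.finBasisOfFinrankEq ℝ V Fact.out).orientation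
  have hpos : 0 < Metric.infDist a (affineSpan ℝ {b, c}) :=
    ((AffineSubspace.closed_of_finiteDimensional _).notMem_iff_infDist_pos
      ⟨b, left_mem_affineSpan_pair ℝ b c⟩).1 ha
  have key := o.infDist_affineSpan_pair_mul_dist b c a
  rw [← o.areaForm_sub_sub_rotate, ← o.infDist_affineSpan_pair_mul_dist c a b, ← h] at key
  exact mul_left_cancel₀ hpos.ne' key

end TwoDim

lemma exists_affineMap_eqOn_vSum (A B C : EuclideanSpace ℝ (Fin 2)) :
    ∃ F : EuclideanSpace ℝ (Fin 2) →ᵃ[ℝ] ℝ,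
      Set.EqOn (vSum A B C) F (convexHull ℝ {A, B, C}) := by
  refine ⟨((affineSpan ℝ {B, C}).signedInfDist A).toAffineMap +
    ((affineSpan ℝ {C, A}).signedInfDist B).toAffineMap +
    ((affineSpan ℝ {A, B}).signedInfDist C).toAffineMap, fun x hx => ?_⟩
  have hx₂ : x ∈ convexHull ℝ {B, C, A} := by rwa [Set.pair_comm C A, Set.insert_comm B A]
  have hx₃ : x ∈ convexHull ℝ {C, A, B} := by rwa [Set.insert_comm C A, Set.pair_comm C B]
  simp only [vSum, lineThrough, AffineMap.coe_add, Pi.add_apply,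
    ContinuousAffineMap.coe_toAffineMap]
  rw [infDist_affineSpan_pair_eq_signedInfDist hx, infDist_affineSpan_pair_eq_signedInfDist hx₂,
    infDist_affineSpan_pair_eq_signedInfDist hx₃]

lemma vSum_eq_of_mem_convexHull {A B C P₁ P₂ P₃ x y : EuclideanSpace ℝ (Fin 2)}
    (hPind : AffineIndependent ℝ ![P₁, P₂, P₃]) (hP₁ : P₁ ∈ convexHull ℝ {A, B, C})
    (hP₂ : P₂ ∈ convexHull ℝ {A, B, C}) (hP₃ : P₃ ∈ convexHull ℝ {A, B, C})
    (h₁₂ : vSum A B C P₁ = vSum A B C P₂) (h₂₃ : vSum A B C P₂ = vSum A B C P₃)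
    (hx : x ∈ convexHull ℝ {A, B, C}) (hy : y ∈ convexHull ℝ {A, B, C}) :
    vSum A B C x = vSum A B C y := by
  obtain ⟨F, hF⟩ := exists_affineMap_eqOn_vSum A B C
  have hconst : F = AffineMap.const ℝ _ (vSum A B C P₁) :=
    AffineMap.eq_const_of_affineIndependent hPind (by simp) fun i => by
      fin_cases i <;> simp [← hF hP₁, ← hF hP₂, ← hF hP₃, h₁₂, h₂₃]
  rw [hF hx, hF hy, hconst, AffineMap.const_apply, AffineMap.const_apply]

/-- If the distance sum function takes the same value at three non-collinear points of the
triangle, then the triangle is equilateral. -/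
theorem stmt_2 (A B C P₁ P₂ P₃ : EuclideanSpace ℝ (Fin 2))
    (hind : AffineIndependent ℝ ![A, B, C])
    (hPind : AffineIndependent ℝ ![P₁, P₂, P₃])
    (hP₁ : P₁ ∈ convexHull ℝ ({A, B, C} : Set (EuclideanSpace ℝ (Fin 2))))
    (hP₂ : P₂ ∈ convexHull ℝ ({A, B, C} : Set (EuclideanSpace ℝ (Fin 2))))
    (hP₃ : P₃ ∈ convexHull ℝ ({A, B, C} : Set (EuclideanSpace ℝ (Fin 2))))
    (h₁₂ : vSum A B C P₁ = vSum A B C P₂) (h₂₃ : vSum A B C P₂ = vSum A B C P₃) :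
    dist A B = dist B C ∧ dist B C = dist C A := by
  have : Fact (finrank ℝ (EuclideanSpace ℝ (Fin 2)) = 2) := ⟨finrank_euclideanSpace_fin⟩
  have hcol : ¬Collinear ℝ {A, B, C} := affineIndependent_iff_not_collinear_set.1 hind
  have hV {x y} := vSum_eq_of_mem_convexHull (x := x) (y := y) hPind hP₁ hP₂ hP₃ h₁₂ h₂₃
  have hA : A ∈ convexHull ℝ {A, B, C} := subset_convexHull ℝ _ (by simp)
  have hB : B ∈ convexHull ℝ {A, B, C} := subset_convexHull ℝ _ (by simp)
  have hC : C ∈ convexHull ℝ {A, B, C} := subset_convexHull ℝ _ (by simp)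
  have heightAB := hV hA hB
  have heightBC := hV hB hC
  simp only [vSum, lineThrough, SetLike.mem_coe, left_mem_affineSpan_pair,
    right_mem_affineSpan_pair, Metric.infDist_zero_of_mem, add_zero, zero_add]
    at heightAB heightBC
  refine ⟨dist_eq_dist_of_infDist_eq (fun h => hcol ?_) (heightAB.trans heightBC).symm,
    dist_eq_dist_of_infDist_eq (fun h => hcol (collinear_insert_of_mem_affineSpan_pair h))
      heightAB⟩
  rw [← Set.pair_comm C B, ← Set.insert_comm C A]
  exact collinear_insert_of_mem_affineSpan_pair h
end
end

section
/- Let A, B, C be three affinely independent points in the Euclidean plane. Then there exists an affine map f : ℝ² →ᵃ[ℝ] ℝ such that V(P) = f(P) for every point P in the convex hull of {A, B, C}, where V is the distance sum function of the triangle. (Consequently the triangle is divided into parallel line segments, namely the level sets of f, on which V is constant.) -/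
/-!
In an oriented Euclidean plane with area form `ω`, the distance from `P` to the line `BC` is
`|ω (C - B) (P - B)| / ‖C - B‖`: the vector from the orthogonal projection of `P` to `P` is
orthogonal to `C - B`, and on orthogonal pairs `|ω x y| = ‖x‖ * ‖y‖`. Hence the distance is the
absolute value of an affine function vanishing at `B` and `C`; with its sign chosen nonnegative at
`A`, it is nonnegative on the whole triangle, so there the absolute value can be dropped. Summing
over the three sides gives the affine map.
-/

noncomputable section

open Metric Module RealInnerProductSpace

attribute [local instance] FiniteDimensional.of_fact_finrank_eq_two

section

variable {E : Type*} [NormedAddCommGroup E] [InnerProductSpace ℝ E] [Fact (finrank ℝ E = 2)]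

theorem infDist_affineSpan_pair_eq_abs_areaForm (o : Orientation ℝ E (Fin 2))
    {B C : E} (hBC : B ≠ C) (P : E) :
    infDist P (line[ℝ, B, C] : Set E) = |o.areaForm (C - B) (P - B)| / ‖C - B‖ := by
  set s := line[ℝ, B, C]
  have : Nonempty s := ⟨⟨B, left_mem_affineSpan_pair ℝ B C⟩⟩
  set Q : E := ↑(EuclideanGeometry.orthogonalProjection s P)
  have hperp : ⟪C - B, P - Q⟫ = 0 := by
    refine Submodule.inner_right_of_mem_orthogonal ?_
      (EuclideanGeometry.vsub_orthogonalProjection_mem_direction_orthogonal s P)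
    rw [direction_affineSpan]
    exact vsub_rev_mem_vectorSpan_pair ℝ B C
  have hQ : o.areaForm (C - B) (Q - B) = 0 := by
    have hQB : Q - B ∈ s.direction :=
      AffineSubspace.vsub_mem_direction (EuclideanGeometry.orthogonalProjection_mem P)
        (left_mem_affineSpan_pair ℝ B C)
    rw [direction_affineSpan] at hQB
    obtain ⟨r, hr⟩ := mem_vectorSpan_pair_rev.mp hQB
    rw [← hr, vsub_eq_sub, map_smul, o.areaForm_apply_self, smul_zero]
  have hne : ‖C - B‖ ≠ 0 := norm_ne_zero_iff.mpr (sub_ne_zero.mpr hBC.symm)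
  rw [← EuclideanGeometry.dist_orthogonalProjection_eq_infDist, dist_eq_norm, eq_div_iff hne,
    show P - B = (P - Q) + (Q - B) by abel, map_add, hQ, add_zero,
    o.abs_areaForm_of_orthogonal hperp, mul_comm]

theorem exists_affineMap_infDist_affineSpan_pair_eq_abs {B C : E} (hBC : B ≠ C) :
    ∃ g : E →ᵃ[ℝ] ℝ, g B = 0 ∧ g C = 0 ∧ ∀ P, infDist P (line[ℝ, B, C] : Set E) = |g P| := by
  let o : Orientation ℝ E (Fin 2) := (finBasisOfFinrankEq ℝ E Fact.out).orientation
  let g : E →ᵃ[ℝ] ℝ := (‖C - B‖⁻¹ • o.areaForm (C - B)).toAffineMap.comp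
    (AffineEquiv.vaddConst ℝ B).symm.toAffineMap
  have hg : ∀ P, g P = ‖C - B‖⁻¹ * o.areaForm (C - B) (P - B) := fun P => rfl
  refine ⟨g, ?_, ?_, fun P => ?_⟩
  · rw [hg, sub_self, map_zero, mul_zero]
  · rw [hg, o.areaForm_apply_self, mul_zero]
  · rw [hg, infDist_affineSpan_pair_eq_abs_areaForm o hBC P, abs_mul, abs_inv, abs_norm,
      inv_mul_eq_div]

theorem exists_affineMap_eq_infDist_affineSpan_pair_on_convexHull (A : E) {B C : E}
    (hBC : B ≠ C) :
    ∃ g : E →ᵃ[ℝ] ℝ, ∀ P ∈ convexHull ℝ {A, B, C}, infDist P (line[ℝ, B, C] : Set E) = g P := by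
  obtain ⟨g, hgB, hgC, hg⟩ := exists_affineMap_infDist_affineSpan_pair_eq_abs hBC
  wlog hA : 0 ≤ g A generalizing g
  · exact this (-g) (by simp [hgB]) (by simp [hgC]) (by simpa using hg) (by simp; linarith)
  have hnonneg : convexHull ℝ {A, B, C} ⊆ g ⁻¹' Set.Ici 0 := by
    refine convexHull_min ?_ ((convex_Ici 0).affine_preimage g)
    rintro x (rfl | rfl | rfl) <;> simp [*]
  exact ⟨g, fun P hP => by rw [hg, abs_of_nonneg (hnonneg hP)]⟩

end

/-- On the triangle, the distance sum function agrees with an affine map `ℝ² →ᵃ[ℝ] ℝ`. -/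
theorem stmt_3 (A B C : EuclideanSpace ℝ (Fin 2))
    (hind : AffineIndependent ℝ ![A, B, C]) :
    ∃ f : EuclideanSpace ℝ (Fin 2) →ᵃ[ℝ] ℝ,
      ∀ P ∈ convexHull ℝ ({A, B, C} : Set (EuclideanSpace ℝ (Fin 2))),
        vSum A B C P = f P := by
  have : Fact (finrank ℝ (EuclideanSpace ℝ (Fin 2)) = 2) := ⟨finrank_euclideanSpace_fin⟩
  have hne : ∀ i j : Fin 3, i ≠ j → ![A, B, C] i ≠ ![A, B, C] j := fun _ _ => hind.injective.ne
  have hBC : B ≠ C := hne 1 2 (by decide)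
  have hCA : C ≠ A := hne 2 0 (by decide)
  have hAB : A ≠ B := hne 0 1 (by decide)
  obtain ⟨g₁, hg₁⟩ := exists_affineMap_eq_infDist_affineSpan_pair_on_convexHull A hBC
  obtain ⟨g₂, hg₂⟩ := exists_affineMap_eq_infDist_affineSpan_pair_on_convexHull B hCA
  obtain ⟨g₃, hg₃⟩ := exists_affineMap_eq_infDist_affineSpan_pair_on_convexHull C hAB
  have hBCA : ({B, C, A} : Set _) = {A, B, C} := by rw [Set.pair_comm, Set.insert_comm]
  have hCAB : ({C, A, B} : Set _) = {A, B, C} := by rw [Set.insert_comm, Set.pair_comm]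
  refine ⟨g₁ + g₂ + g₃, fun P hP => ?_⟩
  rw [vSum, lineThrough, lineThrough, lineThrough, hg₁ P hP, hg₂ P (hBCA ▸ hP),
    hg₃ P (hCAB ▸ hP)]
  rfl
end
end

section
/- Let A, B, C be three affinely independent points in the Euclidean plane whose triangle is not equilateral. Then there exists a nonzero vector v in ℝ² such that for every real k, the locus T_k = {P ∈ convexHull{A,B,C} : V(P) = k} is the intersection of the triangle with an affine line whose direction is spanned by v; in particular, the nonempty loci T_k for different values of k are mutually parallel segments. -/
noncomputable section

/-
On the triangle every distance to a side line is an affine function of `P`: with the plane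
oriented so that `ABC` is positively oriented, `dist(P, line XY) = ω(Y - X, P - X) / |XY|`
for each positively ordered edge `XY`. Summing, `V = ω(u, ·) + const` on the triangle, where
`u` is the sum of the unit vectors along the edges `B → C`, `C → A`, `A → B`, so the loci
`T_k` are cut out by the lines of direction `u`. Pairing `u = 0` with `B - A` and `C - B`
gives `|BC| = |CA| = |AB|`, hence `u ≠ 0` for a non-equilateral triangle.
-/

open Module
open scoped EuclideanSpace

def unitEdgeSum {E : Type*} [NormedAddCommGroup E] [NormedSpace ℝ E] (A B C : E) : E :=
  (dist B C)⁻¹ • (C - B) + (dist C A)⁻¹ • (A - C) + (dist A B)⁻¹ • (B - A)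

namespace Orientation

variable {E : Type*} [NormedAddCommGroup E] [InnerProductSpace ℝ E] [Fact (finrank ℝ E = 2)]
  (o : Orientation ℝ E (Fin 2))

theorem areaForm_eq_zero_iff_exists_eq_smul {u z : E} (hu : u ≠ 0) :
    o.areaForm u z = 0 ↔ ∃ t : ℝ, z = t • u := by
  constructor
  · intro h
    have hu2 : ‖u‖ ^ 2 ≠ 0 := by positivity
    refine ⟨inner ℝ u z / ‖u‖ ^ 2, ext_inner_right ℝ fun y => ?_⟩
    have hlag := o.inner_mul_inner_add_areaForm_mul_areaForm u z y
    rw [h, zero_mul, add_zero] at hlag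
    rw [real_inner_smul_left]
    field_simp
    linarith
  · rintro ⟨t, rfl⟩
    simp

theorem exists_setOf_areaForm_eq {u : E} (hu : u ≠ 0) (c : ℝ) :
    ∃ P₀ : E, {P | o.areaForm u P = c} = {P | ∃ t : ℝ, P = P₀ + t • u} := by
  have hu2 : ‖u‖ ^ 2 ≠ 0 := by positivity
  set P₀ := (c / ‖u‖ ^ 2) • o.rightAngleRotation u
  have hP₀ : o.areaForm u P₀ = c := by
    rw [map_smul, areaForm_rightAngleRotation_right, real_inner_self_eq_norm_sq, smul_eq_mul,
      div_mul_cancel₀ _ hu2]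
  refine ⟨P₀, Set.ext fun P => ?_⟩
  simp only [Set.mem_ofPred_eq, ← sub_eq_iff_eq_add']
  rw [← o.areaForm_eq_zero_iff_exists_eq_smul hu, map_sub, hP₀, sub_eq_zero]

theorem infDist_affineSpan_pair {X Y : E} (h : X ≠ Y) (P : E) :
    Metric.infDist P (affineSpan ℝ {X, Y}) = |o.areaForm (Y - X) (P - X)| / ‖Y - X‖ := by
  set u := Y - X
  have hu : 0 < ‖u‖ := norm_pos_iff.2 (sub_ne_zero.2 h.symm)
  have hshift : ∀ r : ℝ, o.areaForm u (P - (r • u + X)) = o.areaForm u (P - X) := by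
    intro r
    simp [sub_add_eq_sub_sub_swap, map_sub]
  apply le_antisymm
  · set r₀ := inner ℝ u (P - X) / ‖u‖ ^ 2 with hr₀
    have horth : inner ℝ u (P - (r₀ • u + X)) = 0 := by
      rw [sub_add_eq_sub_sub_swap, inner_sub_right, real_inner_smul_right,
        real_inner_self_eq_norm_sq, hr₀, div_mul_cancel₀ _ (by positivity), sub_self]
    calc Metric.infDist P (affineSpan ℝ {X, Y}) ≤ dist P (r₀ • u + X) :=
          Metric.infDist_le_dist_of_mem (AffineMap.lineMap_mem_affineSpan_pair r₀ X Y)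
      _ = |o.areaForm u (P - X)| / ‖u‖ := by
          rw [← hshift r₀, o.abs_areaForm_of_orthogonal horth, dist_eq_norm,
            mul_div_cancel_left₀ _ hu.ne']
  · refine (Metric.le_infDist ⟨X, left_mem_affineSpan_pair ℝ X Y⟩).2 fun Q hQ => ?_
    obtain ⟨r, rfl⟩ := mem_affineSpan_pair_iff_exists_lineMap_eq.1 hQ
    rw [AffineMap.lineMap_apply_module', div_le_iff₀ hu, ← hshift r, dist_eq_norm, mul_comm]
    exact o.abs_areaForm_le _ _

theorem areaForm_sub_nonneg_of_mem_convexHull {X Y Z P : E}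
    (hZ : 0 ≤ o.areaForm (Y - X) (Z - X)) (hP : P ∈ convexHull ℝ {X, Y, Z}) :
    0 ≤ o.areaForm (Y - X) (P - X) := by
  set f := o.areaForm (Y - X)
  have hY : f (Y - X) = 0 := o.areaForm_apply_self _
  rw [map_sub, sub_eq_zero] at hY
  rw [map_sub, sub_nonneg] at hZ ⊢
  refine convexHull_min ?_ (convex_halfSpace_ge f.isLinear (f X)) hP
  rintro Q (rfl | rfl | rfl)
  exacts [le_refl (f Q), hY.ge, hZ]

theorem infDist_affineSpan_pair_of_mem_convexHull {X Y Z P : E}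
    (hZ : 0 < o.areaForm (Y - X) (Z - X)) (hP : P ∈ convexHull ℝ {X, Y, Z}) :
    Metric.infDist P (affineSpan ℝ {X, Y}) = (dist X Y)⁻¹ * o.areaForm (Y - X) (P - X) := by
  have hXY : X ≠ Y := by
    rintro rfl
    simp at hZ
  rw [o.infDist_affineSpan_pair hXY,
    abs_of_nonneg (o.areaForm_sub_nonneg_of_mem_convexHull hZ.le hP), ← dist_eq_norm',
    inv_mul_eq_div]

theorem areaForm_sub_rotate (A B C : E) :
    o.areaForm (C - B) (A - B) = o.areaForm (B - A) (C - A) := by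
  simp only [map_sub, LinearMap.sub_apply, areaForm_apply_self]
  linarith [o.areaForm_swap A C, o.areaForm_swap B C, o.areaForm_swap A B]

theorem areaForm_sub_ne_zero_of_affineIndependent {A B C : E}
    (hind : AffineIndependent ℝ ![A, B, C]) : o.areaForm (B - A) (C - A) ≠ 0 := by
  rw [affineIndependent_iff_not_collinear_set] at hind
  intro h
  obtain ⟨t, ht⟩ := (o.areaForm_eq_zero_iff_exists_eq_smul
    (sub_ne_zero.2 (ne₁₂_of_not_collinear hind).symm)).1 h
  have hC : C ∈ line[ℝ, A, B] := by
    rw [← sub_add_cancel C A, ← vadd_eq_add, vadd_left_mem_affineSpan_pair]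
    exact ⟨t, ht.symm⟩
  refine hind ?_
  rw [Set.pair_comm, Set.insert_comm]
  exact collinear_insert_of_mem_affineSpan_pair hC

theorem exists_areaForm_sub_pos_of_affineIndependent {A B C : E}
    (hind : AffineIndependent ℝ ![A, B, C]) :
    ∃ o : Orientation ℝ E (Fin 2), 0 < o.areaForm (B - A) (C - A) := by
  have : FiniteDimensional ℝ E := .of_fact_finrank_eq_two
  let o₀ := (finBasisOfFinrankEq ℝ E (Fact.out : finrank ℝ E = 2)).orientation
  rcases (o₀.areaForm_sub_ne_zero_of_affineIndependent hind).lt_or_gt with hneg | hpos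
  · exact ⟨-o₀, by simpa [areaForm_neg_orientation] using hneg⟩
  · exact ⟨o₀, hpos⟩

theorem unitEdgeSum_ne_zero {A B C : E} (hs : o.areaForm (B - A) (C - A) ≠ 0)
    (hne : ¬ (dist A B = dist B C ∧ dist B C = dist C A)) : unitEdgeSum A B C ≠ 0 := by
  intro h0
  have h1 := congrArg (o.areaForm (B - A)) h0
  have h2 := congrArg (o.areaForm (C - B)) h0
  simp only [unitEdgeSum, map_add, map_smul, smul_eq_mul, map_zero, areaForm_apply_self,
    mul_zero, add_zero, zero_add] at h1 h2
  set s := o.areaForm (B - A) (C - A)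
  obtain ⟨e₁, e₂, e₃, e₄⟩ : o.areaForm (B - A) (C - B) = s ∧ o.areaForm (B - A) (A - C) = -s ∧
      o.areaForm (C - B) (A - C) = s ∧ o.areaForm (C - B) (B - A) = -s := by
    simp only [s, map_sub, LinearMap.sub_apply, areaForm_apply_self]
    refine ⟨?_, ?_, ?_, ?_⟩ <;>
      linarith [o.areaForm_swap A C, o.areaForm_swap B C, o.areaForm_swap A B]
  rw [e₁, e₂] at h1
  rw [e₃, e₄] at h2
  have hab : dist B C = dist C A :=
    inv_inj.1 (mul_right_cancel₀ hs (by linarith))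
  have hbc : dist C A = dist A B :=
    inv_inj.1 (mul_right_cancel₀ hs (by linarith))
  exact hne ⟨(hab.trans hbc).symm, hab⟩

end Orientation

theorem exists_vSum_eq_areaForm_add {A B C : EuclideanSpace ℝ (Fin 2)}
    (o : Orientation ℝ (EuclideanSpace ℝ (Fin 2)) (Fin 2))
    (hpos : 0 < o.areaForm (B - A) (C - A)) :
    ∃ c : ℝ, ∀ P ∈ convexHull ℝ {A, B, C},
      vSum A B C P = o.areaForm (unitEdgeSum A B C) P + c := by
  have hBCA : ({A, B, C} : Set (EuclideanSpace ℝ (Fin 2))) = {B, C, A} := by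
    rw [Set.insert_comm, Set.pair_comm]
  have hCAB : ({A, B, C} : Set (EuclideanSpace ℝ (Fin 2))) = {C, A, B} := by
    rw [Set.pair_comm, Set.insert_comm]
  have hposB : 0 < o.areaForm (C - B) (A - B) := by rwa [o.areaForm_sub_rotate]
  have hposC : 0 < o.areaForm (A - C) (B - C) := by rwa [o.areaForm_sub_rotate]
  refine ⟨-((dist B C)⁻¹ * o.areaForm (C - B) B + (dist C A)⁻¹ * o.areaForm (A - C) C
      + (dist A B)⁻¹ * o.areaForm (B - A) A), fun P hP => ?_⟩
  rw [vSum, lineThrough, lineThrough, lineThrough,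
    o.infDist_affineSpan_pair_of_mem_convexHull hposB (hBCA ▸ hP),
    o.infDist_affineSpan_pair_of_mem_convexHull hposC (hCAB ▸ hP),
    o.infDist_affineSpan_pair_of_mem_convexHull hpos hP]
  simp only [unitEdgeSum, map_add, map_smul, map_sub, LinearMap.add_apply, LinearMap.smul_apply,
    smul_eq_mul]
  ring

/-- For a non-equilateral triangle there is a fixed nonzero direction `v` such that each
locus `T_k` is the intersection of the triangle with an affine line of direction `v`;
in particular the nonempty loci are mutually parallel segments. -/
theorem stmt_4 (A B C : EuclideanSpace ℝ (Fin 2))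
    (hind : AffineIndependent ℝ ![A, B, C])
    (hne : ¬ (dist A B = dist B C ∧ dist B C = dist C A)) :
    ∃ v : EuclideanSpace ℝ (Fin 2), v ≠ 0 ∧ ∀ k : ℝ, ∃ P₀ : EuclideanSpace ℝ (Fin 2),
      {P ∈ convexHull ℝ ({A, B, C} : Set (EuclideanSpace ℝ (Fin 2))) | vSum A B C P = k}
        = convexHull ℝ ({A, B, C} : Set (EuclideanSpace ℝ (Fin 2)))
            ∩ {P | ∃ t : ℝ, P = P₀ + t • v} := by
  obtain ⟨o, hpos⟩ := Orientation.exists_areaForm_sub_pos_of_affineIndependent hind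
  have hu := o.unitEdgeSum_ne_zero hpos.ne' hne
  obtain ⟨c, hV⟩ := exists_vSum_eq_areaForm_add o hpos
  refine ⟨unitEdgeSum A B C, hu, fun k => ?_⟩
  obtain ⟨P₀, hP₀⟩ := o.exists_setOf_areaForm_eq hu (k - c)
  refine ⟨P₀, ?_⟩
  rw [← hP₀]
  ext P
  exact and_congr_right fun hP => by rw [hV P hP, Set.mem_ofPred_eq, eq_sub_iff_add_eq]
end
end

section
/- Let A, B, C be three affinely independent points in the Euclidean plane with dist A B = dist A C ≠ dist B C (a non-equilateral isosceles triangle with base BC), and let h_A = dist(A, line BC) and h_B = dist(B, line CA) denote the two distinct altitude lengths. If k lies strictly between min(h_A, h_B) and max(h_A, h_B), then the locus T_k = {P ∈ convexHull{A,B,C} : V(P) = k} is a line segment parallel to the base: there exist distinct points P, Q in the frontier of the triangle with Q − P a scalar multiple of C − B and T_k = segment [P, Q]. -/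
noncomputable section

/-!
Write a point of the triangle as `x = α A + β B + γ C` with `α, β, γ ≥ 0`, `α + β + γ = 1`. Its
distance to each side line is the corresponding coordinate times the altitude onto that side, so
`V x = α h_A + β h_B + γ h_C`. Since `h_B · CA = h_C · AB` (both are twice the area) and `AB = AC`,
`h_B = h_C` and `V x = α h_A + (1 - α) h_B`. As `h_A · BC = h_B · CA` and `BC ≠ CA`, `h_A ≠ h_B`, so
`V x = k` pins down `α = s ∈ (0, 1)`; the points of the triangle with `α = s` form the segment from
`s A + (1 - s) B ∈ AB` to `s A + (1 - s) C ∈ AC`.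
-/
local notation "ℝ²" => EuclideanSpace ℝ (Fin 2)

open Metric Filter Topology

def cross (u v : ℝ²) : ℝ := u 0 * v 1 - u 1 * v 0

lemma cross_sq_add_inner_sq (u v : ℝ²) : cross u v ^ 2 + inner ℝ u v ^ 2 = ‖u‖ ^ 2 * ‖v‖ ^ 2 := by
  simp only [cross, PiLp.inner_apply, RCLike.inner_apply, conj_trivial, EuclideanSpace.norm_sq_eq,
    Fin.sum_univ_two, Real.norm_eq_abs, sq_abs]
  ring

lemma abs_cross_le (u v : ℝ²) : |cross u v| ≤ ‖u‖ * ‖v‖ :=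
  abs_le_of_sq_le_sq (by nlinarith [cross_sq_add_inner_sq u v]) (by positivity)

lemma cross_sub_smul (u v : ℝ²) (t : ℝ) : cross (u - t • v) v = cross u v := by
  simp only [cross, PiLp.sub_apply, PiLp.smul_apply, smul_eq_mul]
  ring

lemma infDist_lineThrough {B C : ℝ²} (hBC : B ≠ C) (P : ℝ²) :
    infDist P (lineThrough B C) = |cross (P - B) (C - B)| / dist B C := by
  set p := P - B
  set v := C - B
  have hv : 0 < ‖v‖ := norm_pos_iff.mpr (sub_ne_zero.mpr hBC.symm)
  have hdist (t : ℝ) : dist P (AffineMap.lineMap B C t) = ‖p - t • v‖ := by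
    rw [dist_eq_norm, AffineMap.lineMap_apply_module']
    simp only [p, v]
    abel_nf
  rw [show dist B C = ‖v‖ from dist_eq_norm_sub' B C]
  apply le_antisymm
  · -- the foot of the perpendicular from `P`
    set t := inner ℝ p v / ‖v‖ ^ 2
    have hfoot : ‖p - t • v‖ ^ 2 = (|cross p v| / ‖v‖) ^ 2 := by
      rw [norm_sub_sq_real, inner_smul_right, norm_smul, Real.norm_eq_abs, mul_pow, sq_abs,
        div_pow |cross p v|, sq_abs]
      simp only [t]
      field_simp
      linear_combination -cross_sq_add_inner_sq p v
    calc infDist P (lineThrough B C) ≤ dist P (AffineMap.lineMap B C t) :=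
          infDist_le_dist_of_mem (AffineMap.lineMap_mem_affineSpan_pair t B C)
      _ = |cross p v| / ‖v‖ := by rw [hdist, ← sq_eq_sq₀ (norm_nonneg _) (by positivity), hfoot]
  · rw [lineThrough, le_infDist ⟨B, left_mem_affineSpan_pair ℝ B C⟩]
    intro y hy
    obtain ⟨t, rfl⟩ := mem_affineSpan_pair_iff_exists_lineMap_eq.mp hy
    rw [hdist, div_le_iff₀ hv, ← cross_sub_smul p v t]
    exact abs_cross_le _ _

lemma cross_sub_sub_rotate (A B C : ℝ²) : cross (B - C) (A - C) = cross (A - B) (C - B) := by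
  simp only [cross, PiLp.sub_apply]
  ring

lemma cross_sub_of_eq_smul_add {A B C x : ℝ²} {α β γ : ℝ} (hsum : α + β + γ = 1)
    (hx : x = α • A + β • B + γ • C) : cross (x - B) (C - B) = α * cross (A - B) (C - B) := by
  obtain rfl : β = 1 - α - γ := by linarith
  subst hx
  simp only [cross, PiLp.sub_apply, PiLp.add_apply, PiLp.smul_apply, smul_eq_mul]
  ring

lemma infDist_lineThrough_of_eq_smul_add {A B C x : ℝ²} (hBC : B ≠ C) {α β γ : ℝ} (hα : 0 ≤ α)
    (hsum : α + β + γ = 1) (hx : x = α • A + β • B + γ • C) :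
    infDist x (lineThrough B C) = α * infDist A (lineThrough B C) := by
  rw [infDist_lineThrough hBC, infDist_lineThrough hBC, cross_sub_of_eq_smul_add hsum hx, abs_mul,
    abs_of_nonneg hα, mul_div_assoc]

lemma infDist_lineThrough_mul_dist_rotate {A B C : ℝ²} (hBC : B ≠ C) (hCA : C ≠ A) :
    infDist A (lineThrough B C) * dist B C = infDist B (lineThrough C A) * dist C A := by
  rw [infDist_lineThrough hBC, infDist_lineThrough hCA, cross_sub_sub_rotate,
    div_mul_cancel₀ _ (dist_ne_zero.mpr hBC), div_mul_cancel₀ _ (dist_ne_zero.mpr hCA),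
    cross_sub_sub_rotate B C A]

lemma infDist_lineThrough_pos {A B C : ℝ²} (h : ¬Collinear ℝ {A, B, C}) :
    0 < infDist A (lineThrough B C) := by
  have hclosed : IsClosed (lineThrough B C) := AffineSubspace.closed_of_finiteDimensional _
  rw [← infDist_pos_iff_notMem_closure (s := lineThrough B C) ⟨B, left_mem_affineSpan_pair ℝ B C⟩,
    hclosed.closure_eq]
  exact fun hA ↦ h (collinear_insert_of_mem_affineSpan_pair hA)

lemma infDist_lineThrough_eq_of_dist_eq {A B C : ℝ²} (hcol : ¬Collinear ℝ {A, B, C})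
    (hiso : dist A B = dist A C) :
    infDist C (lineThrough A B) = infDist B (lineThrough C A) := by
  have hAB := ne₁₂_of_not_collinear hcol
  have h := infDist_lineThrough_mul_dist_rotate (ne₁₃_of_not_collinear hcol).symm hAB
  rw [dist_comm C A, ← hiso] at h
  exact (mul_right_cancel₀ (dist_ne_zero.mpr hAB) h).symm

lemma infDist_lineThrough_ne_of_dist_ne {A B C : ℝ²} (hcol : ¬Collinear ℝ {A, B, C})
    (hiso : dist A B = dist A C) (hneq : dist A B ≠ dist B C) :
    infDist A (lineThrough B C) ≠ infDist B (lineThrough C A) := by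
  intro h
  have h' := infDist_lineThrough_mul_dist_rotate (ne₂₃_of_not_collinear hcol)
    (ne₁₃_of_not_collinear hcol).symm
  rw [h, dist_comm C A, ← hiso] at h'
  exact hneq (mul_left_cancel₀ (h ▸ infDist_lineThrough_pos hcol).ne' h').symm

lemma mem_convexHull_triple_iff {𝕜 E : Type*} [Field 𝕜] [LinearOrder 𝕜] [IsStrictOrderedRing 𝕜]
    [AddCommGroup E] [Module 𝕜 E] {A B C x : E} :
    x ∈ convexHull 𝕜 {A, B, C} ↔ ∃ α β γ : 𝕜, 0 ≤ α ∧ 0 ≤ β ∧ 0 ≤ γ ∧ α + β + γ = 1 ∧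
      x = α • A + β • B + γ • C := by
  constructor
  · rw [← convexJoin_singleton_segment, mem_convexJoin]
    rintro ⟨_, rfl, y, ⟨b, c, hb, hc, hbc, rfl⟩, a, bc, ha, hbc', habc, rfl⟩
    refine ⟨a, bc * b, bc * c, ha, by positivity, by positivity, ?_, by module⟩
    linear_combination habc + bc * hbc
  · rintro ⟨α, β, γ, hα, hβ, hγ, hsum, rfl⟩
    have := (convex_convexHull 𝕜 ({A, B, C} : Set E)).sum_mem (t := Finset.univ) (w := ![α, β, γ])
      (z := ![A, B, C]) (by simp [Fin.forall_fin_succ, *]) (by simp [Fin.sum_univ_three, hsum])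
      fun i _ ↦ subset_convexHull 𝕜 _ (by fin_cases i <;> simp)
    simpa [Fin.sum_univ_three] using this

lemma vSum_eq_of_eq_smul_add {A B C x : ℝ²} (hAB : A ≠ B) (hBC : B ≠ C) (hCA : C ≠ A) {α β γ : ℝ}
    (hα : 0 ≤ α) (hβ : 0 ≤ β) (hγ : 0 ≤ γ) (hsum : α + β + γ = 1)
    (hx : x = α • A + β • B + γ • C) :
    vSum A B C x = α * infDist A (lineThrough B C) + β * infDist B (lineThrough C A) +
      γ * infDist C (lineThrough A B) := by
  rw [vSum, infDist_lineThrough_of_eq_smul_add hBC hα hsum hx,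
    infDist_lineThrough_of_eq_smul_add hCA hβ (by linarith : β + γ + α = 1) (by rw [hx]; abel),
    infDist_lineThrough_of_eq_smul_add hAB hγ (by linarith : γ + α + β = 1) (by rw [hx]; abel)]

lemma mem_frontier_convexHull_of_mem_segment {A B C x : ℝ²} (hcol : ¬Collinear ℝ {C, A, B})
    (hx : x ∈ segment ℝ A B) : x ∈ frontier (convexHull ℝ {A, B, C}) := by
  have hAB : A ≠ B := ne₂₃_of_not_collinear hcol
  set d := cross (C - A) (B - A)
  have hd : d ≠ 0 := by
    have hpos := infDist_lineThrough_pos hcol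
    rw [infDist_lineThrough hAB, div_pos_iff_of_pos_right (dist_pos.mpr hAB)] at hpos
    exact abs_pos.mp hpos
  have hside : ∀ z ∈ convexHull ℝ {A, B, C}, 0 ≤ cross (z - A) (B - A) * d := by
    intro z hz
    obtain ⟨α, β, γ, -, -, hγ, hsum, rfl⟩ := mem_convexHull_triple_iff.mp hz
    rw [cross_sub_of_eq_smul_add (α := γ) (β := α) (γ := β) (by linarith) (by abel), mul_assoc]
    exact mul_nonneg hγ (mul_self_nonneg d)
  obtain ⟨a, b, ha, hb, hab, rfl⟩ := hx
  rw [frontier_eq_closure_inter_closure]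
  refine ⟨subset_closure (segment_subset_convexHull (by simp) (by simp) ⟨a, b, ha, hb, hab, rfl⟩),
    ?_⟩
  -- for `δ > 0`, `x + δ • (x - C)` lies on the far side of line `AB` from `C`
  have hlim : Tendsto (fun δ : ℝ ↦ a • A + b • B + δ • (a • A + b • B - C)) (𝓝[>] 0)
      (𝓝 (a • A + b • B)) := by
    refine Tendsto.mono_left (Continuous.tendsto' (by fun_prop) 0 _ ?_) nhdsWithin_le_nhds
    simp
  refine mem_closure_of_tendsto hlim (eventually_nhdsWithin_of_forall fun δ hδ hmem ↦ ?_)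
  have hcross : cross (a • A + b • B + δ • (a • A + b • B - C) - A) (B - A) = -δ * d :=
    cross_sub_of_eq_smul_add (β := (1 + δ) * a) (γ := (1 + δ) * b)
      (by linear_combination (1 + δ) * hab) (by module)
  have := hside _ hmem
  rw [hcross] at this
  nlinarith [mul_pos (Set.mem_Ioi.mp hδ) (mul_self_pos.mpr hd)]

lemma setOf_vSum_eq_segment {A B C : ℝ²} (hcol : ¬Collinear ℝ {A, B, C})
    (halt_eq : infDist C (lineThrough A B) = infDist B (lineThrough C A))
    (halt_ne : infDist A (lineThrough B C) ≠ infDist B (lineThrough C A)) {s : ℝ} (hs₀ : 0 ≤ s)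
    (hs₁ : s < 1) :
    {x ∈ convexHull ℝ {A, B, C} | vSum A B C x =
        s * infDist A (lineThrough B C) + (1 - s) * infDist B (lineThrough C A)} =
      segment ℝ (s • A + (1 - s) • B) (s • A + (1 - s) • C) := by
  have hAB := ne₁₂_of_not_collinear hcol
  have hBC := ne₂₃_of_not_collinear hcol
  have hCA := (ne₁₃_of_not_collinear hcol).symm
  have h1s : 0 < 1 - s := sub_pos.mpr hs₁
  ext x
  constructor
  · rintro ⟨hx, hV⟩
    obtain ⟨α, β, γ, hα, hβ, hγ, hsum, rfl⟩ := mem_convexHull_triple_iff.mp hx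
    rw [vSum_eq_of_eq_smul_add hAB hBC hCA hα hβ hγ hsum rfl, halt_eq] at hV
    obtain rfl : α = s := by
      have : (α - s) * (infDist A (lineThrough B C) - infDist B (lineThrough C A)) = 0 := by
        linear_combination hV - infDist B (lineThrough C A) * hsum
      simpa [sub_eq_zero, halt_ne] using this
    refine ⟨β / (1 - α), γ / (1 - α), by positivity, by positivity, ?_, ?_⟩
    · field_simp
      linarith
    · match_scalars <;> field_simp
      linear_combination α * hsum
  · rintro ⟨b, c, hb, hc, hbc, rfl⟩
    have hx : b • (s • A + (1 - s) • B) + c • (s • A + (1 - s) • C) =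
        s • A + ((1 - s) * b) • B + ((1 - s) * c) • C := by
      match_scalars
      · linear_combination s * hbc
      all_goals ring
    have hsum : s + (1 - s) * b + (1 - s) * c = 1 := by linear_combination (1 - s) * hbc
    refine ⟨mem_convexHull_triple_iff.mpr ⟨_, _, _, hs₀, by positivity, by positivity, hsum, hx⟩, ?_⟩
    rw [vSum_eq_of_eq_smul_add hAB hBC hCA hs₀ (by positivity) (by positivity) hsum hx,
      halt_eq]
    linear_combination infDist B (lineThrough C A) * (1 - s) * hbc

/-- **Proposition 1.** For a non-equilateral isosceles triangle with base `BC` and `k`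
strictly between the two altitude lengths, the locus `T_k` is a segment parallel to the
base, with endpoints on the boundary of the triangle. -/
theorem stmt_5 (A B C : EuclideanSpace ℝ (Fin 2))
    (hind : AffineIndependent ℝ ![A, B, C])
    (hiso : dist A B = dist A C) (hneq : dist A B ≠ dist B C) (k : ℝ)
    (hk₁ : min (Metric.infDist A (lineThrough B C)) (Metric.infDist B (lineThrough C A)) < k)
    (hk₂ : k < max (Metric.infDist A (lineThrough B C)) (Metric.infDist B (lineThrough C A))) :
    ∃ P Q : EuclideanSpace ℝ (Fin 2), P ≠ Q ∧
      P ∈ frontier (convexHull ℝ ({A, B, C} : Set (EuclideanSpace ℝ (Fin 2)))) ∧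
      Q ∈ frontier (convexHull ℝ ({A, B, C} : Set (EuclideanSpace ℝ (Fin 2)))) ∧
      (∃ t : ℝ, Q - P = t • (C - B)) ∧
      {P' ∈ convexHull ℝ ({A, B, C} : Set (EuclideanSpace ℝ (Fin 2))) | vSum A B C P' = k}
        = segment ℝ P Q := by
  have hcol := affineIndependent_iff_not_collinear_set.mp hind
  have hBC := ne₂₃_of_not_collinear hcol
  have halt_eq := infDist_lineThrough_eq_of_dist_eq hcol hiso
  have halt_ne := infDist_lineThrough_ne_of_dist_ne hcol hiso hneq
  obtain ⟨s, t, hs₀, ht, hst, rfl⟩ : k ∈ openSegment ℝ (infDist A (lineThrough B C))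
      (infDist B (lineThrough C A)) := by
    rw [openSegment_eq_Ioo' halt_ne]
    exact ⟨hk₁, hk₂⟩
  obtain rfl : t = 1 - s := by linarith
  have hs₁ : s < 1 := by linarith
  refine ⟨s • A + (1 - s) • B, s • A + (1 - s) • C, ?_, ?_, ?_, ⟨1 - s, by module⟩,
    setOf_vSum_eq_segment hcol halt_eq halt_ne hs₀.le hs₁⟩
  · intro h
    exact hBC (smul_right_injective _ ht.ne' (add_left_cancel h))
  · refine mem_frontier_convexHull_of_mem_segment ?_ ⟨s, 1 - s, hs₀.le, ht.le, by ring, rfl⟩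
    rwa [Set.insert_comm, Set.pair_comm]
  · rw [Set.pair_comm]
    refine mem_frontier_convexHull_of_mem_segment ?_ ⟨s, 1 - s, hs₀.le, ht.le, by ring, rfl⟩
    rwa [Set.insert_comm]
end
end

section
/- Let A, B, C be three affinely independent points in the Euclidean plane whose three altitude lengths h_A = dist(A, line BC), h_B = dist(B, line CA), h_C = dist(C, line AB) are pairwise distinct (a scalene triangle). If k lies strictly between the smallest and the largest of h_A, h_B, h_C, then the locus T_k = {P ∈ convexHull{A,B,C} : V(P) = k} is a line segment whose endpoints lie on the boundary of the triangle: there exist points P, Q in the frontier of the convex hull of {A,B,C} with T_k = segment [P, Q]. -/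
noncomputable section

/-!
On the closed triangle every point lies on the same side of each side line as the opposite
vertex, so each of the three distances is an affine function there, and `V` agrees on the
triangle with `P ↦ ⟪P, N⟫ - c` for some vector `N`. As `V` takes values below and above `k` at
vertices, `N ≠ 0`, so in the plane the level set `{V = k}` is a line, which meets the compact
convex triangle in a nonempty segment; the segment's endpoints are on the frontier because the
line leaves the triangle there.
-/

open Metric Set Module
open scoped RealInnerProductSpace

section LineSegment

variable {E : Type*} [NormedAddCommGroup E] [NormedSpace ℝ E]

theorem exists_frontier_inter_range_lineMap_eq_segment {T : Set E} (hTconv : Convex ℝ T)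
    (hTcomp : IsCompact T) {p q : E} (hpq : p ≠ q) (hp : p ∈ T) :
    ∃ P Q, P ∈ frontier T ∧ Q ∈ frontier T ∧
      T ∩ range (AffineMap.lineMap p q : ℝ → E) = segment ℝ P Q := by
  set φ : ℝ →ᵃ[ℝ] E := AffineMap.lineMap p q
  have hφ : Continuous φ := AffineMap.lineMap_continuous
  have hdist : 0 < dist p q := dist_pos.mpr hpq
  have hanti : AntilipschitzWith (nndist p q)⁻¹ φ :=
    AntilipschitzWith.of_le_mul_dist fun s t => by
      rw [dist_lineMap_lineMap, NNReal.coe_inv, coe_nndist, mul_comm (dist s t),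
        inv_mul_cancel_left₀ hdist.ne']
  have hcomp : IsCompact (φ ⁻¹' T) :=
    isCompact_of_isClosed_isBounded (hTcomp.isClosed.preimage hφ)
      (hanti.isBounded_preimage hTcomp.isBounded)
  have hconn : IsConnected (φ ⁻¹' T) :=
    ⟨⟨0, by simpa [φ] using hp⟩, (hTconv.affine_preimage φ).isPreconnected⟩
  obtain ⟨a, b, hab, hI⟩ : ∃ a b : ℝ, a ≤ b ∧ φ ⁻¹' T = Icc a b :=
    ⟨_, _, csInf_le_csSup hconn.nonempty hcomp.bddBelow hcomp.bddAbove,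
      eq_Icc_of_connected_compact hconn hcomp⟩
  have hfr : {a, b} ⊆ φ ⁻¹' frontier T := by
    rw [← frontier_Icc hab, ← hI]
    exact hφ.frontier_preimage_subset T
  refine ⟨φ a, φ b, hfr (by simp), hfr (by simp), ?_⟩
  rw [← image_preimage_eq_inter_range, hI, ← segment_eq_Icc hab, image_segment]

end LineSegment

section Plane

variable {V : Type*} [NormedAddCommGroup V] [InnerProductSpace ℝ V] [Fact (finrank ℝ V = 2)]

attribute [local instance] FiniteDimensional.of_fact_finrank_eq_two

theorem exists_norm_eq_one_inner_eq_zero {v : V} (hv : v ≠ 0) :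
    ∃ n : V, ‖n‖ = 1 ∧ ⟪v, n⟫ = 0 := by
  have hrank : finrank ℝ (ℝ ∙ v)ᗮ = 1 := Submodule.finrank_orthogonal_span_singleton hv
  obtain ⟨w, hw, hw0⟩ := Submodule.exists_mem_ne_zero_of_ne_bot (p := (ℝ ∙ v)ᗮ)
    fun h => by rw [h, finrank_bot] at hrank; exact zero_ne_one hrank
  exact ⟨‖w‖⁻¹ • w, norm_smul_inv_norm hw0, by
    rw [inner_smul_right, Submodule.mem_orthogonal_singleton_iff_inner_right.mp hw, mul_zero]⟩

theorem exists_setOf_inner_eq_eq_range_lineMap {N : V} (hN : N ≠ 0) (p : V) :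
    ∃ q ≠ p, {x | ⟪x, N⟫ = ⟪p, N⟫} = range (AffineMap.lineMap p q : ℝ → V) := by
  obtain ⟨d, hd, hNd⟩ := exists_norm_eq_one_inner_eq_zero hN
  have hd0 : d ≠ 0 := norm_ne_zero_iff.mp (by simp [hd])
  refine ⟨d +ᵥ p, by simpa using hd0, ?_⟩
  ext x
  simp only [mem_range, AffineMap.lineMap_vadd_apply]
  simp only [mem_ofPred_eq, vadd_eq_add]
  constructor
  · intro hx
    have hmem : x - p ∈ ℝ ∙ d :=
      Submodule.mem_span_singleton_of_inner_eq_zero_of_inner_eq_zero hN hd0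
        (by rw [inner_sub_right, real_inner_comm, hx, real_inner_comm, sub_self]) hNd
    obtain ⟨t, ht⟩ := Submodule.mem_span_singleton.mp hmem
    exact ⟨t, by rw [ht, sub_add_cancel]⟩
  · rintro ⟨t, rfl⟩
    rw [inner_add_left, real_inner_smul_left, real_inner_comm, hNd, mul_zero, zero_add]

theorem infDist_line_eq_abs_inner {X Y n : V} (hXY : X ≠ Y) (hn : ‖n‖ = 1)
    (hYX : ⟪Y - X, n⟫ = 0) (P : V) :
    infDist P (line[ℝ, X, Y] : Set V) = |⟪P - X, n⟫| := by
  set s : AffineSubspace ℝ V := line[ℝ, X, Y]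
  have hX : X ∈ s := left_mem_affineSpan_pair ℝ X Y
  have : Nonempty s := ⟨⟨X, hX⟩⟩
  have hdir : s.direction = ℝ ∙ (Y - X) := by
    rw [direction_affineSpan, vectorSpan_pair_rev, vsub_eq_sub]
  set R := EuclideanGeometry.orthogonalProjection s P
  have hRX : ⟪(R : V) - X, n⟫ = 0 := by
    refine Submodule.inner_right_of_mem_orthogonal
      (AffineSubspace.vsub_mem_direction (EuclideanGeometry.orthogonalProjection_mem P) hX) ?_
    rw [hdir, Submodule.mem_orthogonal_singleton_iff_inner_right]
    exact hYX
  have hPR : P - R ∈ ℝ ∙ n := by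
    have h : ⟪Y - X, P - R⟫ = 0 := Submodule.inner_right_of_mem_orthogonal
      (AffineSubspace.vsub_mem_direction (right_mem_affineSpan_pair ℝ X Y) hX)
      (EuclideanGeometry.vsub_orthogonalProjection_mem_direction_orthogonal s P)
    exact Submodule.mem_span_singleton_of_inner_eq_zero_of_inner_eq_zero
      (sub_ne_zero.mpr hXY.symm) (norm_ne_zero_iff.mp (by simp [hn])) h hYX
  obtain ⟨t, ht⟩ := Submodule.mem_span_singleton.mp hPR
  have hinner : ⟪P - X, n⟫ = t := by
    rw [← sub_add_sub_cancel P R X, inner_add_left, hRX, ← ht, real_inner_smul_left,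
      real_inner_self_eq_norm_sq, hn]
    ring
  rw [← EuclideanGeometry.dist_orthogonalProjection_eq_infDist, dist_eq_norm, ← ht, norm_smul,
    hn, hinner, mul_one, Real.norm_eq_abs]

theorem exists_infDist_line_eq_inner_of_mem_convexHull {X Y : V} (hXY : X ≠ Y) (Z : V) :
    ∃ n : V, ∀ P ∈ convexHull ℝ {X, Y, Z},
      infDist P (line[ℝ, X, Y] : Set V) = ⟪P - X, n⟫ := by
  suffices key : ∀ n : V, ‖n‖ = 1 → ⟪Y - X, n⟫ = 0 → 0 ≤ ⟪Z - X, n⟫ →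
      ∀ P ∈ convexHull ℝ {X, Y, Z}, infDist P (line[ℝ, X, Y] : Set V) = ⟪P - X, n⟫ by
    obtain ⟨n, hn, hYX⟩ := exists_norm_eq_one_inner_eq_zero (sub_ne_zero.mpr hXY.symm)
    rcases le_total 0 ⟪Z - X, n⟫ with hZ | hZ
    · exact ⟨n, key n hn hYX hZ⟩
    · exact ⟨-n, key (-n) (by rw [norm_neg, hn]) (by rw [inner_neg_right, hYX, neg_zero])
        (by rw [inner_neg_right]; linarith)⟩
  intro n hn hYX hZ P hP
  have hhalf : convexHull ℝ {X, Y, Z} ⊆ {P : V | ⟪X, n⟫ ≤ ⟪P, n⟫} := by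
    refine convexHull_min ?_ (convex_halfSpace_ge
      ⟨fun x y => inner_add_left x y n, fun c x => real_inner_smul_left x n c⟩ _)
    simp only [insert_subset_iff, singleton_subset_iff, mem_ofPred_eq]
    exact ⟨le_rfl, by linarith [inner_sub_left (𝕜 := ℝ) Y X n],
      by linarith [inner_sub_left (𝕜 := ℝ) Z X n]⟩
  rw [infDist_line_eq_abs_inner hXY hn hYX, abs_of_nonneg]
  rw [inner_sub_left, sub_nonneg]
  exact hhalf hP

theorem exists_frontier_sep_inner_eq_eq_segment {T : Set V} (hTconv : Convex ℝ T)
    (hTcomp : IsCompact T) {N u v : V} {c : ℝ} (hu : u ∈ T) (hv : v ∈ T)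
    (huc : ⟪u, N⟫ < c) (hcv : c < ⟪v, N⟫) :
    ∃ P Q, P ∈ frontier T ∧ Q ∈ frontier T ∧
      {x ∈ T | ⟪x, N⟫ = c} = segment ℝ P Q := by
  have hN : N ≠ 0 := by
    rintro rfl
    rw [inner_zero_right] at huc hcv
    linarith
  obtain ⟨p, hp, hpc⟩ : c ∈ (fun x => ⟪x, N⟫) '' T :=
    hTconv.isPreconnected.intermediate_value hu hv
      (continuous_id.inner continuous_const).continuousOn ⟨huc.le, hcv.le⟩
  obtain ⟨q, hqp, hline⟩ := exists_setOf_inner_eq_eq_range_lineMap hN p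
  have hsep : {x ∈ T | ⟪x, N⟫ = c} = T ∩ range (AffineMap.lineMap p q : ℝ → V) := by
    rw [← hline, ← hpc]
    rfl
  rw [hsep]
  exact exists_frontier_inter_range_lineMap_eq_segment hTconv hTcomp hqp.symm hp

end Plane

instance : Fact (finrank ℝ (EuclideanSpace ℝ (Fin 2)) = 2) := ⟨finrank_euclideanSpace_fin⟩

section Triangle

variable (A B C : EuclideanSpace ℝ (Fin 2))

theorem infDist_left_lineThrough : infDist A (lineThrough A B) = 0 :=
  infDist_zero_of_mem (left_mem_affineSpan_pair ℝ A B)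

theorem infDist_right_lineThrough : infDist B (lineThrough A B) = 0 :=
  infDist_zero_of_mem (right_mem_affineSpan_pair ℝ A B)

theorem vSum_vertices :
    vSum A B C A = infDist A (lineThrough B C) ∧ vSum A B C B = infDist B (lineThrough C A) ∧
      vSum A B C C = infDist C (lineThrough A B) := by
  simp only [vSum, infDist_left_lineThrough, infDist_right_lineThrough, add_zero, zero_add,
    and_self]

variable {A B C}

theorem exists_vSum_eq_inner_sub (hind : AffineIndependent ℝ ![A, B, C]) :
    ∃ (N : EuclideanSpace ℝ (Fin 2)) (c : ℝ),
      ∀ P ∈ convexHull ℝ {A, B, C}, vSum A B C P = ⟪P, N⟫ - c := by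
  have hAB : A ≠ B := by simpa using hind.injective.ne (show (0 : Fin 3) ≠ 1 by decide)
  have hBC : B ≠ C := by simpa using hind.injective.ne (show (1 : Fin 3) ≠ 2 by decide)
  have hCA : C ≠ A := by simpa using hind.injective.ne (show (2 : Fin 3) ≠ 0 by decide)
  obtain ⟨n₁, h₁⟩ := exists_infDist_line_eq_inner_of_mem_convexHull hBC A
  obtain ⟨n₂, h₂⟩ := exists_infDist_line_eq_inner_of_mem_convexHull hCA B
  obtain ⟨n₃, h₃⟩ := exists_infDist_line_eq_inner_of_mem_convexHull hAB C
  rw [pair_comm, insert_comm] at h₁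
  rw [insert_comm, pair_comm] at h₂
  refine ⟨n₁ + n₂ + n₃, ⟪B, n₁⟫ + ⟪C, n₂⟫ + ⟪A, n₃⟫, fun P hP => ?_⟩
  rw [vSum, lineThrough, lineThrough, lineThrough, h₁ P hP, h₂ P hP, h₃ P hP]
  simp only [inner_sub_left, inner_add_right]
  ring

end Triangle

theorem stmt_6_general (A B C : EuclideanSpace ℝ (Fin 2))
    (hind : AffineIndependent ℝ ![A, B, C]) (k : ℝ)
    (hk₁ : min (Metric.infDist A (lineThrough B C))
      (min (Metric.infDist B (lineThrough C A)) (Metric.infDist C (lineThrough A B))) < k)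
    (hk₂ : k < max (Metric.infDist A (lineThrough B C))
      (max (Metric.infDist B (lineThrough C A)) (Metric.infDist C (lineThrough A B)))) :
    ∃ P Q : EuclideanSpace ℝ (Fin 2),
      P ∈ frontier (convexHull ℝ ({A, B, C} : Set (EuclideanSpace ℝ (Fin 2)))) ∧
      Q ∈ frontier (convexHull ℝ ({A, B, C} : Set (EuclideanSpace ℝ (Fin 2)))) ∧
      {P' ∈ convexHull ℝ ({A, B, C} : Set (EuclideanSpace ℝ (Fin 2))) | vSum A B C P' = k}
        = segment ℝ P Q := by
  set T := convexHull ℝ ({A, B, C} : Set (EuclideanSpace ℝ (Fin 2)))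
  obtain ⟨N, c, hV⟩ := exists_vSum_eq_inner_sub hind
  obtain ⟨hA, hB, hC⟩ := vSum_vertices A B C
  have hvert : ({A, B, C} : Set (EuclideanSpace ℝ (Fin 2))) ⊆ T := subset_convexHull ℝ _
  obtain ⟨u, huT, hu⟩ : ∃ u ∈ T, vSum A B C u < k := by
    simp only [min_lt_iff] at hk₁
    rcases hk₁ with h | h | h
    exacts [⟨A, hvert (by simp), hA ▸ h⟩, ⟨B, hvert (by simp), hB ▸ h⟩,
      ⟨C, hvert (by simp), hC ▸ h⟩]
  obtain ⟨v, hvT, hv⟩ : ∃ v ∈ T, k < vSum A B C v := by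
    simp only [lt_max_iff] at hk₂
    rcases hk₂ with h | h | h
    exacts [⟨A, hvert (by simp), hA ▸ h⟩, ⟨B, hvert (by simp), hB ▸ h⟩,
      ⟨C, hvert (by simp), hC ▸ h⟩]
  rw [sep_ext_iff.mpr fun P hP => by rw [hV P hP, sub_eq_iff_eq_add]]
  exact exists_frontier_sep_inner_eq_eq_segment (convex_convexHull ℝ _)
    ((toFinite _).isCompact_convexHull ℝ) huT hvT
    (by linarith [hV u huT]) (by linarith [hV v hvT])

/-- **Proposition 2.** For a scalene triangle (pairwise distinct altitude lengths) and `k`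
strictly between the smallest and the largest altitude, the locus `T_k` is a line segment
whose endpoints lie on the boundary of the triangle. -/
theorem stmt_6 (A B C : EuclideanSpace ℝ (Fin 2))
    (hind : AffineIndependent ℝ ![A, B, C])
    (hAB : Metric.infDist A (lineThrough B C) ≠ Metric.infDist B (lineThrough C A))
    (hBC : Metric.infDist B (lineThrough C A) ≠ Metric.infDist C (lineThrough A B))
    (hAC : Metric.infDist A (lineThrough B C) ≠ Metric.infDist C (lineThrough A B)) (k : ℝ)
    (hk₁ : min (Metric.infDist A (lineThrough B C))
      (min (Metric.infDist B (lineThrough C A)) (Metric.infDist C (lineThrough A B))) < k)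
    (hk₂ : k < max (Metric.infDist A (lineThrough B C))
      (max (Metric.infDist B (lineThrough C A)) (Metric.infDist C (lineThrough A B)))) :
    ∃ P Q : EuclideanSpace ℝ (Fin 2),
      P ∈ frontier (convexHull ℝ ({A, B, C} : Set (EuclideanSpace ℝ (Fin 2)))) ∧
      Q ∈ frontier (convexHull ℝ ({A, B, C} : Set (EuclideanSpace ℝ (Fin 2)))) ∧
      {P' ∈ convexHull ℝ ({A, B, C} : Set (EuclideanSpace ℝ (Fin 2))) | vSum A B C P' = k}
        = segment ℝ P Q :=
  stmt_6_general A B C hind k hk₁ hk₂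
end
end

section
/- Let A, B, C be three affinely independent points in the Euclidean plane, and let h_A = dist(A, line BC), h_B = dist(B, line CA), h_C = dist(C, line AB) be the altitude lengths. Then the image of the convex hull of {A, B, C} under the distance sum function V is exactly the closed interval [min(h_A, h_B, h_C), max(h_A, h_B, h_C)]; in particular V attains its minimum and maximum over the triangle at vertices, where its values are the altitude lengths. -/
noncomputable section

local notation "E" => EuclideanSpace ℝ (Fin 2)

lemma infDist_eq_dist_proj (s : AffineSubspace ℝ E) [Nonempty s] (p : E) :
    Metric.infDist p (s : Set E) = dist p (EuclideanGeometry.orthogonalProjection s p) := by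
  refine le_antisymm
    (Metric.infDist_le_dist_of_mem (EuclideanGeometry.orthogonalProjection_mem p))
    (le_of_not_gt fun hlt => ?_)
  obtain ⟨q, hq, hlt'⟩ :=
    (Metric.infDist_lt_iff ⟨_, (EuclideanGeometry.orthogonalProjection_mem (s := s) p)⟩).1 hlt
  have h := EuclideanGeometry.dist_sq_eq_dist_orthogonalProjection_sq_add_dist_orthogonalProjection_sq
    (s := s) p hq
  have hle : dist p (EuclideanGeometry.orthogonalProjection s p) ≤ dist q p := by
    nlinarith [dist_nonneg (x := q) (y := p),
      dist_nonneg (x := p) (y := (EuclideanGeometry.orthogonalProjection s p : E))]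
  rw [dist_comm q p] at hle
  linarith

lemma key (X Y Z : E) {u s t : ℝ} (hu : 0 ≤ u) (hsum : u + s + t = 1) :
    Metric.infDist (u • X + s • Y + t • Z) (lineThrough Y Z)
      = u * Metric.infDist X (lineThrough Y Z) := by
  set L : AffineSubspace ℝ E := affineSpan ℝ {Y, Z} with hL
  have hY : Y ∈ L := subset_affineSpan ℝ _ (by simp)
  have hZ : Z ∈ L := subset_affineSpan ℝ _ (by simp)
  haveI : Nonempty L := ⟨⟨Y, hY⟩⟩
  have hline : lineThrough Y Z = (L : Set E) := rfl
  set π := EuclideanGeometry.orthogonalProjection L with hπ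
  rw [hline, infDist_eq_dist_proj, infDist_eq_dist_proj]
  have hmap : ∀ v : E, (π (v +ᵥ Y) : E) = (π.linear v : E) + Y := by
    intro v
    rw [π.map_vadd Y v]
    have hpy : (π Y : E) = Y := (EuclideanGeometry.orthogonalProjection_eq_self_iff).2 hY
    push_cast
    rw [hpy]
    rfl
  have hvadd : ∀ w : E, w = (w - Y) +ᵥ Y := by intro w; simp
  have hZ' : (π.linear (Z - Y) : E) = Z - Y := by
    have hpz : (π ((Z - Y) +ᵥ Y) : E) = Z := by
      rw [← hvadd Z]
      exact (EuclideanGeometry.orthogonalProjection_eq_self_iff).2 hZ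
    have h := hmap (Z - Y)
    rw [hpz] at h
    exact eq_sub_of_add_eq h.symm
  have hs : s = 1 - u - t := by linarith
  subst hs
  have hXproj : (π X : E) = (π.linear (X - Y) : E) + Y := by
    conv_lhs => rw [hvadd X]
    rw [hmap]
  have hPY : u • X + (1 - u - t) • Y + t • Z - Y = u • (X - Y) + t • (Z - Y) := by module
  have hPproj : (π (u • X + (1 - u - t) • Y + t • Z) : E)
      = u • (π.linear (X - Y) : E) + t • (Z - Y) + Y := by
    conv_lhs => rw [hvadd (u • X + (1 - u - t) • Y + t • Z)]
    rw [hmap, hPY, map_add, map_smul, map_smul]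
    push_cast
    rw [hZ']
  have hdiff : (u • X + (1 - u - t) • Y + t • Z) - (π (u • X + (1 - u - t) • Y + t • Z) : E)
      = u • (X - (π X : E)) := by
    rw [hPproj, hXproj]
    module
  rw [dist_eq_norm, dist_eq_norm, hdiff, norm_smul, Real.norm_eq_abs, abs_of_nonneg hu]

lemma vSum_combo (A B C : E) {a b c : ℝ} (ha : 0 ≤ a) (hb : 0 ≤ b) (hc : 0 ≤ c)
    (hsum : a + b + c = 1) :
    vSum A B C (a • A + b • B + c • C)
      = a * Metric.infDist A (lineThrough B C) + b * Metric.infDist B (lineThrough C A)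
        + c * Metric.infDist C (lineThrough A B) := by
  have h1 : Metric.infDist (a • A + b • B + c • C) (lineThrough B C)
      = a * Metric.infDist A (lineThrough B C) := key A B C ha hsum
  have h2 : Metric.infDist (a • A + b • B + c • C) (lineThrough C A)
      = b * Metric.infDist B (lineThrough C A) := by
    have hPeq : a • A + b • B + c • C = b • B + c • C + a • A := by module
    rw [hPeq]
    exact key B C A hb (by linarith)
  have h3 : Metric.infDist (a • A + b • B + c • C) (lineThrough A B)
      = c * Metric.infDist C (lineThrough A B) := by
    have hPeq : a • A + b • B + c • C = c • C + a • A + b • B := by module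
    rw [hPeq]
    exact key C A B hc (by linarith)
  rw [vSum, h1, h2, h3]

/-- The image of the triangle under the distance sum function is exactly the closed interval
between the smallest and the largest altitude lengths. -/
theorem stmt_7 (A B C : EuclideanSpace ℝ (Fin 2))
    (hind : AffineIndependent ℝ ![A, B, C]) :
    (fun P => vSum A B C P) '' convexHull ℝ ({A, B, C} : Set (EuclideanSpace ℝ (Fin 2)))
      = Set.Icc
          (min (Metric.infDist A (lineThrough B C))
            (min (Metric.infDist B (lineThrough C A)) (Metric.infDist C (lineThrough A B))))
          (max (Metric.infDist A (lineThrough B C))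
            (max (Metric.infDist B (lineThrough C A)) (Metric.infDist C (lineThrough A B)))) := by
  set hA := Metric.infDist A (lineThrough B C) with hhA
  set hB := Metric.infDist B (lineThrough C A) with hhB
  set hC := Metric.infDist C (lineThrough A B) with hhC
  set m := min hA (min hB hC) with hm
  set M := max hA (max hB hC) with hM
  have hvA : vSum A B C A = hA := by
    have h := vSum_combo A B C (a := 1) (b := 0) (c := 0) zero_le_one le_rfl le_rfl (by norm_num)
    simpa using h
  have hvB : vSum A B C B = hB := by
    have h := vSum_combo A B C (a := 0) (b := 1) (c := 0) le_rfl zero_le_one le_rfl (by norm_num)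
    simpa using h
  have hvC : vSum A B C C = hC := by
    have h := vSum_combo A B C (a := 0) (b := 0) (c := 1) le_rfl le_rfl zero_le_one (by norm_num)
    simpa using h
  have hAmem : A ∈ convexHull ℝ ({A, B, C} : Set E) := subset_convexHull ℝ _ (by simp)
  have hBmem : B ∈ convexHull ℝ ({A, B, C} : Set E) := subset_convexHull ℝ _ (by simp)
  have hCmem : C ∈ convexHull ℝ ({A, B, C} : Set E) := subset_convexHull ℝ _ (by simp)
  apply Set.Subset.antisymm
  · rintro _ ⟨P, hP, rfl⟩
    rw [show ({A, B, C} : Set E) = insert A {B, C} from rfl,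
      convexHull_insert ⟨B, by simp⟩, mem_convexJoin] at hP
    obtain ⟨A', hA', x, hx, hPx⟩ := hP
    rw [Set.mem_singleton_iff] at hA'
    rw [hA'] at hPx
    rw [convexHull_pair] at hx
    obtain ⟨p, q, hp, hq, hpq, rfl⟩ := hx
    obtain ⟨a, b, ha, hb, hab, rfl⟩ := hPx
    have hPe : a • A + b • (p • B + q • C) = a • A + (b * p) • B + (b * q) • C := by module
    show vSum A B C (a • A + b • (p • B + q • C)) ∈ Set.Icc m M
    rw [hPe, vSum_combo A B C ha (by positivity) (by positivity) (by nlinarith),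
      ← hhA, ← hhB, ← hhC]
    have hw : a + b * p + b * q = 1 := by nlinarith
    have hem : m = a * m + (b * p) * m + (b * q) * m := by
      rw [show a * m + (b * p) * m + (b * q) * m = (a + b * p + b * q) * m by ring, hw, one_mul]
    have heM : M = a * M + (b * p) * M + (b * q) * M := by
      rw [show a * M + (b * p) * M + (b * q) * M = (a + b * p + b * q) * M by ring, hw, one_mul]
    constructor
    · have h1 : m ≤ hA := min_le_left _ _
      have h2 : m ≤ hB := le_trans (min_le_right _ _) (min_le_left _ _)
      have h3 : m ≤ hC := le_trans (min_le_right _ _) (min_le_right _ _)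
      calc m = a * m + (b * p) * m + (b * q) * m := hem
        _ ≤ a * hA + (b * p) * hB + (b * q) * hC := by
            gcongr <;> first | positivity | assumption
        _ = a * hA + b * p * hB + b * q * hC := by ring
    · have h1 : hA ≤ M := le_max_left _ _
      have h2 : hB ≤ M := le_trans (le_max_left _ _) (le_max_right _ _)
      have h3 : hC ≤ M := le_trans (le_max_right _ _) (le_max_right _ _)
      calc a * hA + b * p * hB + b * q * hC = a * hA + (b * p) * hB + (b * q) * hC := by ring
        _ ≤ a * M + (b * p) * M + (b * q) * M := by
            gcongr <;> first | positivity | assumption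
        _ = M := heM.symm
  · have hconn : IsPreconnected ((fun P => vSum A B C P) '' convexHull ℝ ({A, B, C} : Set E)) := by
      apply IsPreconnected.image
      · exact (convex_convexHull ℝ _).isPreconnected
      · apply Continuous.continuousOn
        unfold vSum
        exact ((Metric.continuous_infDist_pt _).add (Metric.continuous_infDist_pt _)).add
          (Metric.continuous_infDist_pt _)
    have hmmem : m ∈ (fun P => vSum A B C P) '' convexHull ℝ ({A, B, C} : Set E) := by
      rcases min_choice hA (min hB hC) with h | h
      · exact ⟨A, hAmem, by show vSum A B C A = m; rw [hvA, hm, h]⟩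
      · rcases min_choice hB hC with h' | h'
        · exact ⟨B, hBmem, by show vSum A B C B = m; rw [hvB, hm, h, h']⟩
        · exact ⟨C, hCmem, by show vSum A B C C = m; rw [hvC, hm, h, h']⟩
    have hMmem : M ∈ (fun P => vSum A B C P) '' convexHull ℝ ({A, B, C} : Set E) := by
      rcases max_choice hA (max hB hC) with h | h
      · exact ⟨A, hAmem, by show vSum A B C A = M; rw [hvA, hM, h]⟩
      · rcases max_choice hB hC with h' | h'
        · exact ⟨B, hBmem, by show vSum A B C B = M; rw [hvB, hM, h, h']⟩
        · exact ⟨C, hCmem, by show vSum A B C C = M; rw [hvC, hM, h, h']⟩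
    exact hconn.Icc_subset hmmem hMmem
end
end

section
/- Let A, B, C be three affinely independent points in the Euclidean plane ℝ², and let W(P) = dist(P, line BC)² + dist(P, line CA)² + dist(P, line AB)² be the sum of squared distances to the side lines. Then there exist a point O ∈ ℝ² and a positive-definite quadratic form q on ℝ² such that W(P) = W(O) + q(P − O) for all P ∈ ℝ². Consequently, for every k > W(O) the level set {P : W(P) = k} is an ellipse, and for different values of k these level sets are homothetic ellipses with common center O. -/
noncomputable section

open scoped RealInnerProductSpace

abbrev E2 := EuclideanSpace ℝ (Fin 2)

/-- orthogonal projection onto the complement of `u` (for unit `u`). -/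
def pj (u : E2) : E2 →ₗ[ℝ] E2 :=
  LinearMap.id - ((innerSL ℝ u).toLinearMap).smulRight u

lemma pj_apply (u v : E2) : pj u v = v - ⟪u, v⟫ • u := rfl

lemma inner_u_pj (u : E2) (hu : ‖u‖ = 1) (v : E2) : ⟪u, pj u v⟫ = 0 := by
  rw [pj_apply, inner_sub_right, real_inner_smul_right, real_inner_self_eq_norm_sq, hu]
  ring

lemma inner_pj_pj (u : E2) (hu : ‖u‖ = 1) (a b : E2) :
    ⟪pj u a, pj u b⟫ = ⟪a, pj u b⟫ := by
  rw [pj_apply u a, inner_sub_left, real_inner_smul_left, inner_u_pj u hu b]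
  ring

lemma inner_pj_self (u : E2) (hu : ‖u‖ = 1) (v : E2) :
    ⟪pj u v, v⟫ = ‖pj u v‖ ^ 2 := by
  have h := inner_pj_pj u hu v v
  rw [real_inner_comm, ← h, real_inner_self_eq_norm_sq]

lemma pj_symm (u x y : E2) : ⟪pj u x, y⟫ = ⟪x, pj u y⟫ := by
  rw [pj_apply, pj_apply, inner_sub_left, inner_sub_right, real_inner_smul_left,
    real_inner_smul_right, real_inner_comm x u]
  ring

attribute [irreducible] pj

lemma mem_lineThrough_iff (X Y Q : E2) :
    Q ∈ lineThrough X Y ↔ ∃ r : ℝ, Q - X = r • (Y - X) := by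
  unfold lineThrough
  rw [SetLike.mem_coe,
    ← AffineSubspace.vsub_right_mem_direction_iff_mem (left_mem_affineSpan_pair ℝ X Y) Q,
    direction_affineSpan, mem_vectorSpan_pair_rev]
  simp only [vsub_eq_sub]
  constructor
  · rintro ⟨r, hr⟩; exact ⟨r, hr.symm⟩
  · rintro ⟨r, hr⟩; exact ⟨r, hr.symm⟩

lemma infDist_lineThrough_s9 (X Y P : E2) (h : X ≠ Y) :
    Metric.infDist P (lineThrough X Y) = ‖pj (‖Y - X‖⁻¹ • (Y - X)) (P - X)‖ := by
  have hd : Y - X ≠ 0 := sub_ne_zero.mpr h.symm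
  set d := Y - X with hdd
  set u := ‖d‖⁻¹ • d with hud
  have hu : ‖u‖ = 1 := norm_smul_inv_norm hd
  have hdu : d = ‖d‖ • u := by
    rw [hud, smul_smul, mul_inv_cancel₀ (norm_ne_zero_iff.mpr hd), one_smul]
  -- the foot of the perpendicular
  set F : E2 := ⟪u, P - X⟫ • u + X with hF
  have hFmem : F ∈ lineThrough X Y := by
    rw [mem_lineThrough_iff]
    refine ⟨⟪u, P - X⟫ * ‖d‖⁻¹, ?_⟩
    rw [hF, add_sub_cancel_right, mul_smul, ← hud]
  have hPF : P - F = pj u (P - X) := by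
    rw [hF, pj_apply]
    abel
  -- lower bound for any point of the line
  have key : ∀ Q ∈ lineThrough X Y, ‖pj u (P - X)‖ ≤ dist P Q := by
    intro Q hQ
    obtain ⟨r, hr⟩ := (mem_lineThrough_iff X Y Q).mp hQ
    have h2 : (r * ‖d‖) • u = r • d := by rw [mul_smul, ← hdu]
    have hPQ : P - Q = pj u (P - X) + (⟪u, P - X⟫ - r * ‖d‖) • u := by
      rw [pj_apply, sub_smul, h2, ← sub_add_cancel Q X, hr]
      abel
    have horth : ⟪pj u (P - X), (⟪u, P - X⟫ - r * ‖d‖) • u⟫ = 0 := by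
      have h0 : ⟪pj u (P - X), u⟫ = 0 := by
        rw [real_inner_comm]; exact inner_u_pj u hu _
      rw [real_inner_smul_right, h0, mul_zero]
    have hsq : ‖P - Q‖ ^ 2 = ‖pj u (P - X)‖ ^ 2 + ‖(⟪u, P - X⟫ - r * ‖d‖) • u‖ ^ 2 := by
      rw [hPQ, norm_add_sq_real, horth]
      ring
    rw [dist_eq_norm]
    nlinarith [hsq, norm_nonneg (P - Q), norm_nonneg (pj u (P - X)),
      sq_nonneg ‖(⟪u, P - X⟫ - r * ‖d‖) • u‖]
  apply le_antisymm
  · calc Metric.infDist P (lineThrough X Y) ≤ dist P F := Metric.infDist_le_dist_of_mem hFmem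
      _ = ‖pj u (P - X)‖ := by rw [dist_eq_norm, hPF]
  · by_contra hlt
    push_neg at hlt
    obtain ⟨Q, hQmem, hQlt⟩ := (Metric.infDist_lt_iff ⟨F, hFmem⟩).mp hlt
    exact absurd hQlt (not_lt.mpr (key Q hQmem))


lemma pj_eq_zero (u v : E2) (h : pj u v = 0) : v = ⟪u, v⟫ • u := by
  have h2 := pj_apply u v
  rw [h, eq_comm, sub_eq_zero] at h2
  exact h2

/-- **Theorem 3(a).** The squared-distance sum function of a triangle is a positive-definite
quadratic form plus a constant, centered at some point `O`; hence its level sets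
`{W = k}` for `k > W(O)` are homothetic ellipses with common center `O`. -/
theorem stmt_9 (A B C : EuclideanSpace ℝ (Fin 2))
    (hind : AffineIndependent ℝ ![A, B, C]) :
    ∃ O : EuclideanSpace ℝ (Fin 2), ∃ q : QuadraticForm ℝ (EuclideanSpace ℝ (Fin 2)),
      q.PosDef ∧ ∀ P : EuclideanSpace ℝ (Fin 2),
        wSum A B C P = wSum A B C O + q (P - O) := by
  have hinj := hind.injective
  have hAB : A ≠ B := fun h =>
    absurd (hinj (show ![A,B,C] 0 = ![A,B,C] 1 by simpa using h)) (by decide)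
  have hBC : B ≠ C := fun h =>
    absurd (hinj (show ![A,B,C] 1 = ![A,B,C] 2 by simpa using h)) (by decide)
  have hCA : C ≠ A := fun h =>
    absurd (hinj (show ![A,B,C] 2 = ![A,B,C] 0 by simpa using h)) (by decide)
  have hncol : ¬Collinear ℝ ({A, B, C} : Set E2) := by
    have h := affineIndependent_iff_not_collinear.mp hind
    have hr : Set.range ![A,B,C] = ({A, B, C} : Set E2) := by
      ext x
      simp [Fin.exists_fin_succ, Set.mem_insert_iff]
      tauto
    rwa [hr] at h
  set u₁ : E2 := ‖C - B‖⁻¹ • (C - B) with hu₁d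
  set u₂ : E2 := ‖A - C‖⁻¹ • (A - C) with hu₂d
  set u₃ : E2 := ‖B - A‖⁻¹ • (B - A) with hu₃d
  have hu₁ : ‖u₁‖ = 1 := norm_smul_inv_norm (sub_ne_zero.mpr hBC.symm)
  have hu₂ : ‖u₂‖ = 1 := norm_smul_inv_norm (sub_ne_zero.mpr hCA.symm)
  have hu₃ : ‖u₃‖ = 1 := norm_smul_inv_norm (sub_ne_zero.mpr hAB.symm)
  have hCBu : C - B = ‖C - B‖ • u₁ := by
    rw [hu₁d, smul_smul,
      mul_inv_cancel₀ (norm_ne_zero_iff.mpr (sub_ne_zero.mpr hBC.symm)), one_smul]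
  have hBAu : B - A = ‖B - A‖ • u₃ := by
    rw [hu₃d, smul_smul,
      mul_inv_cancel₀ (norm_ne_zero_iff.mpr (sub_ne_zero.mpr hAB.symm)), one_smul]
  set T : E2 →ₗ[ℝ] E2 := pj u₁ + pj u₂ + pj u₃ with hT
  -- nondegeneracy from non-collinearity
  have hker : ∀ v : E2, pj u₁ v = 0 → pj u₃ v = 0 → v = 0 := by
    intro v h1 h3
    by_contra hv
    have hv1 := pj_eq_zero u₁ v h1
    have hv3 := pj_eq_zero u₃ v h3
    have hi1 : ⟪u₁, v⟫ ≠ 0 := fun h => hv (by rw [hv1, h, zero_smul])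
    have hi3 : ⟪u₃, v⟫ ≠ 0 := fun h => hv (by rw [hv3, h, zero_smul])
    have hCB : C - B = (⟪u₁, v⟫⁻¹ * ‖C - B‖) • v := by
      have e1 : ⟪u₁, v⟫ • (C - B) = ‖C - B‖ • v := by
        calc ⟪u₁, v⟫ • (C - B) = ⟪u₁, v⟫ • (‖C - B‖ • u₁) := by rw [← hCBu]
          _ = ‖C - B‖ • (⟪u₁, v⟫ • u₁) := by module
          _ = ‖C - B‖ • v := by rw [← hv1]
      calc C - B = (⟪u₁, v⟫⁻¹ * ⟪u₁, v⟫) • (C - B) := by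
            rw [inv_mul_cancel₀ hi1, one_smul]
        _ = ⟪u₁, v⟫⁻¹ • (⟪u₁, v⟫ • (C - B)) := by rw [mul_smul]
        _ = ⟪u₁, v⟫⁻¹ • (‖C - B‖ • v) := by rw [e1]
        _ = (⟪u₁, v⟫⁻¹ * ‖C - B‖) • v := by rw [smul_smul]
    have hBA : B - A = (⟪u₃, v⟫⁻¹ * ‖B - A‖) • v := by
      have e1 : ⟪u₃, v⟫ • (B - A) = ‖B - A‖ • v := by
        calc ⟪u₃, v⟫ • (B - A) = ⟪u₃, v⟫ • (‖B - A‖ • u₃) := by rw [← hBAu]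
          _ = ‖B - A‖ • (⟪u₃, v⟫ • u₃) := by module
          _ = ‖B - A‖ • v := by rw [← hv3]
      calc B - A = (⟪u₃, v⟫⁻¹ * ⟪u₃, v⟫) • (B - A) := by
            rw [inv_mul_cancel₀ hi3, one_smul]
        _ = ⟪u₃, v⟫⁻¹ • (⟪u₃, v⟫ • (B - A)) := by rw [mul_smul]
        _ = ⟪u₃, v⟫⁻¹ • (‖B - A‖ • v) := by rw [e1]
        _ = (⟪u₃, v⟫⁻¹ * ‖B - A‖) • v := by rw [smul_smul]
    apply hncol
    rw [collinear_iff_of_mem (Set.mem_insert A {B, C})]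
    refine ⟨v, ?_⟩
    intro p hp
    rcases hp with h | h | h
    · exact ⟨0, by rw [h]; simp⟩
    · refine ⟨⟪u₃, v⟫⁻¹ * ‖B - A‖, ?_⟩
      rw [h, vadd_eq_add, ← hBA]
      abel
    · refine ⟨⟪u₃, v⟫⁻¹ * ‖B - A‖ + ⟪u₁, v⟫⁻¹ * ‖C - B‖, ?_⟩
      rw [h, vadd_eq_add, add_smul, ← hBA, ← hCB]
      abel
  -- quadratic values of T
  have hq : ∀ v : E2, ⟪T v, v⟫ = ‖pj u₁ v‖ ^ 2 + ‖pj u₂ v‖ ^ 2 + ‖pj u₃ v‖ ^ 2 := by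
    intro v
    rw [hT]
    simp only [LinearMap.add_apply, inner_add_left]
    rw [inner_pj_self u₁ hu₁, inner_pj_self u₂ hu₂, inner_pj_self u₃ hu₃]
  have hpos : ∀ v : E2, v ≠ 0 → 0 < ⟪T v, v⟫ := by
    intro v hv
    rw [hq v]
    have h13 : pj u₁ v ≠ 0 ∨ pj u₃ v ≠ 0 := by
      by_contra h
      push_neg at h
      exact hv (hker v h.1 h.2)
    rcases h13 with h | h
    · have h' : 0 < ‖pj u₁ v‖ ^ 2 := pow_pos (norm_pos_iff.mpr h) 2
      nlinarith [sq_nonneg ‖pj u₂ v‖, sq_nonneg ‖pj u₃ v‖]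
    · have h' : 0 < ‖pj u₃ v‖ ^ 2 := pow_pos (norm_pos_iff.mpr h) 2
      nlinarith [sq_nonneg ‖pj u₂ v‖, sq_nonneg ‖pj u₁ v‖]
  -- T is surjective
  have hTinj : Function.Injective T := by
    rw [← LinearMap.ker_eq_bot, LinearMap.ker_eq_bot']
    intro v hv
    by_contra hv0
    have h := hpos v hv0
    rw [hv, inner_zero_left] at h
    exact lt_irrefl 0 h
  have hTsurj : Function.Surjective T := LinearMap.injective_iff_surjective.mp hTinj
  obtain ⟨O, hO⟩ := hTsurj (pj u₁ B + pj u₂ C + pj u₃ A)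
  -- the quadratic form
  set Bf : LinearMap.BilinForm ℝ E2 := LinearMap.mk₂ ℝ (fun x y => ⟪T x, y⟫)
    (fun x x' y => by
      show ⟪T (x + x'), y⟫ = ⟪T x, y⟫ + ⟪T x', y⟫
      rw [map_add, inner_add_left])
    (fun c x y => by
      show ⟪T (c • x), y⟫ = c • ⟪T x, y⟫
      rw [map_smul, real_inner_smul_left, smul_eq_mul])
    (fun x y y' => by
      show ⟪T x, y + y'⟫ = ⟪T x, y⟫ + ⟪T x, y'⟫
      rw [inner_add_right])
    (fun c x y => by
      show ⟪T x, c • y⟫ = c • ⟪T x, y⟫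
      rw [real_inner_smul_right, smul_eq_mul]) with hBf
  have hBfa : ∀ x : E2, Bf.toQuadraticMap x = ⟪T x, x⟫ := by
    intro x
    rw [LinearMap.BilinMap.toQuadraticMap_apply, hBf, LinearMap.mk₂_apply]
  refine ⟨O, Bf.toQuadraticMap, ?_, ?_⟩
  · intro x hx
    rw [hBfa x]
    exact hpos x hx
  · intro P
    have hwsum : ∀ Q : E2, wSum A B C Q =
        ‖pj u₁ (Q - B)‖ ^ 2 + ‖pj u₂ (Q - C)‖ ^ 2 + ‖pj u₃ (Q - A)‖ ^ 2 := by
      intro Q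
      unfold wSum
      rw [infDist_lineThrough_s9 B C Q hBC, infDist_lineThrough_s9 C A Q hCA,
        infDist_lineThrough_s9 A B Q hAB]
    set v : E2 := P - O with hv
    have hsplit : ∀ (u : E2), ‖u‖ = 1 → ∀ X : E2, ‖pj u (P - X)‖ ^ 2 =
        ‖pj u (O - X)‖ ^ 2 + ‖pj u v‖ ^ 2 + 2 * ⟪v, pj u (O - X)⟫ := by
      intro u hu X
      have h1 : P - X = v + (O - X) := by rw [hv]; abel
      have h2 : pj u (P - X) = pj u v + pj u (O - X) := by rw [h1, map_add]
      rw [h2, norm_add_sq_real, inner_pj_pj u hu]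
      ring
    have hzero : pj u₁ (O - B) + pj u₂ (O - C) + pj u₃ (O - A) = 0 := by
      have h : pj u₁ (O - B) + pj u₂ (O - C) + pj u₃ (O - A)
          = T O - (pj u₁ B + pj u₂ C + pj u₃ A) := by
        rw [hT]
        simp only [LinearMap.add_apply, map_sub]
        abel
      rw [h, hO, sub_self]
    have hcross : ⟪v, pj u₁ (O - B)⟫ + ⟪v, pj u₂ (O - C)⟫ + ⟪v, pj u₃ (O - A)⟫ = 0 := by
      rw [← inner_add_right, ← inner_add_right, hzero, inner_zero_right]
    rw [hwsum P, hwsum O, hBfa, hq v,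
      hsplit u₁ hu₁ B, hsplit u₂ hu₂ C, hsplit u₃ hu₃ A]
    linarith [hcross]
end
end

section
/- Let a, b, c > 0, and set p = a² + c², q = a² + b². Define the quadratic coefficients 𝒜 = a²/p + a²/q, ℬ = 2ac/p − 2ab/q, 𝒞 = c²/p + b²/q + 1 (the second-order coefficients of the quadratic equation of the locus {W = k} for the triangle with vertices (0,a), (−b,0), (c,0)). Then the discriminant satisfies ℬ² − 4·𝒜·𝒞 = −4·(a²/(p·q))·(b² + 2bc + c² + p + q), and in particular ℬ² − 4·𝒜·𝒞 < 0, so the locus is an ellipse. -/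
noncomputable section

/-- The discriminant computation in the proof of Theorem 3(a): with `p = a² + c²`,
`q = a² + b²` and the quadratic coefficients `𝒜, ℬ, 𝒞` of the locus `{W = k}`,
one has `ℬ² − 4𝒜𝒞 = −4(a²/(pq))(b² + 2bc + c² + p + q) < 0`, so the locus is an ellipse. -/
theorem stmt_11 (a b c p q : ℝ) (ha : 0 < a) (hb : 0 < b) (hc : 0 < c)
    (hp : p = a ^ 2 + c ^ 2) (hq : q = a ^ 2 + b ^ 2) :
    (2 * a * c / p - 2 * a * b / q) ^ 2
        - 4 * (a ^ 2 / p + a ^ 2 / q) * (c ^ 2 / p + b ^ 2 / q + 1)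
      = -4 * (a ^ 2 / (p * q)) * (b ^ 2 + 2 * b * c + c ^ 2 + p + q) ∧
    (2 * a * c / p - 2 * a * b / q) ^ 2
        - 4 * (a ^ 2 / p + a ^ 2 / q) * (c ^ 2 / p + b ^ 2 / q + 1) < 0 := by
  have hp0 : 0 < p := by rw [hp]; positivity
  have hq0 : 0 < q := by rw [hq]; positivity
  have heq : (2 * a * c / p - 2 * a * b / q) ^ 2
        - 4 * (a ^ 2 / p + a ^ 2 / q) * (c ^ 2 / p + b ^ 2 / q + 1)
      = -4 * (a ^ 2 / (p * q)) * (b ^ 2 + 2 * b * c + c ^ 2 + p + q) := by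
    subst hp hq
    field_simp
    ring
  refine ⟨heq, ?_⟩
  rw [heq]
  have : 0 < 4 * (a ^ 2 / (p * q)) * (b ^ 2 + 2 * b * c + c ^ 2 + p + q) := by positivity
  linarith
end
end

section
/- Let a, b > 0 and consider the isosceles triangle in ℝ² with vertices A = (0, a), B = (−b, 0), C = (b, 0). Then for every point P = (x, y) in ℝ² and every real k, the equation W(P) = k holds if and only if x²/(a² + 3b²) + (y − 2ab²/(a² + 3b²))²/(2a²) = ((a² + b²)·k − 2a²b²)/(2a²·(a² + 3b²)) + 2b⁴/(a² + 3b²)². -/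
noncomputable section

/-!
The squared distance from `p` to the line through `x` and `y` is
`‖p - x‖² - ⟪y - x, p - x⟫² / ‖y - x‖²`, which in the plane becomes, by Lagrange's identity,
the squared cross product of `y - x` and `p - x` divided by `‖y - x‖²`. For the isosceles triangle
this gives `W(x, y) = y² + 2 (a² x² + b² (y - a)²) / (a² + b²)`; completing the square turns
`W = k` into the stated ellipse, the passage from `W` to the right-hand side being an affine
bijection of `ℝ`.
-/

open EuclideanGeometry RealInnerProductSpace

lemma infDist_affineSpan_pair_sq {V P : Type*} [NormedAddCommGroup V] [InnerProductSpace ℝ V]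
    [MetricSpace P] [NormedAddTorsor V P] (p x y : P) :
    Metric.infDist p (affineSpan ℝ {x, y} : Set P) ^ 2 =
      ‖p -ᵥ x‖ ^ 2 - ⟪y -ᵥ x, p -ᵥ x⟫ ^ 2 / ‖y -ᵥ x‖ ^ 2 := by
  rw [← dist_orthogonalProjection_eq_infDist,
    orthogonalProjection_apply_mem _ (left_mem_affineSpan_pair ℝ x y), dist_eq_norm_vsub V,
    vsub_vadd_eq_vsub_sub, Submodule.coe_orthogonalProjectionOnto_apply]
  simp only [direction_affineSpan, vectorSpan_pair_rev]
  rw [Submodule.starProjection_singleton, norm_sub_sq_real, inner_smul_right, norm_smul,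
    real_inner_comm]
  rcases eq_or_ne (y -ᵥ x) 0 with hv | hv
  · simp [hv]
  · have : ‖y -ᵥ x‖ ≠ 0 := norm_ne_zero_iff.mpr hv
    simp only [Real.norm_eq_abs, mul_pow, sq_abs, RCLike.ofReal_real_eq_id, id]
    field_simp
    ring

lemma norm_sq_mul_norm_sq_sub_inner_sq (v w : EuclideanSpace ℝ (Fin 2)) :
    ‖v‖ ^ 2 * ‖w‖ ^ 2 - ⟪v, w⟫ ^ 2 = (v 0 * w 1 - v 1 * w 0) ^ 2 := by
  simp only [EuclideanSpace.norm_sq_eq, PiLp.inner_apply, Fin.sum_univ_two, Real.norm_eq_abs,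
    sq_abs, RCLike.inner_apply, conj_trivial]
  ring

lemma infDist_lineThrough_sq {X Y : EuclideanSpace ℝ (Fin 2)} (hXY : X ≠ Y)
    (P : EuclideanSpace ℝ (Fin 2)) :
    Metric.infDist P (lineThrough X Y) ^ 2 =
      ((Y 0 - X 0) * (P 1 - X 1) - (Y 1 - X 1) * (P 0 - X 0)) ^ 2 /
        ((Y 0 - X 0) ^ 2 + (Y 1 - X 1) ^ 2) := by
  have hlen : ‖Y -ᵥ X‖ ^ 2 ≠ 0 := by simpa [sub_eq_zero] using hXY.symm
  rw [lineThrough, infDist_affineSpan_pair_sq, sub_div' hlen, mul_comm,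
    norm_sq_mul_norm_sq_sub_inner_sq, EuclideanSpace.norm_sq_eq]
  simp [Fin.sum_univ_two, sq_abs]

@[simp] lemma pt_apply_zero (x y : ℝ) : pt x y 0 = x := rfl

@[simp] lemma pt_apply_one (x y : ℝ) : pt x y 1 = y := rfl

lemma pt_ne_pt_of_fst_ne {x x' : ℝ} (y y' : ℝ) (h : x ≠ x') : pt x y ≠ pt x' y' :=
  fun he => h (by simpa using congrArg (· 0) he)

lemma wSum_isosceles {a b : ℝ} (hb : b ≠ 0) (P : EuclideanSpace ℝ (Fin 2)) :
    wSum (pt 0 a) (pt (-b) 0) (pt b 0) P =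
      P 1 ^ 2 + 2 * (a ^ 2 * P 0 ^ 2 + b ^ 2 * (P 1 - a) ^ 2) / (a ^ 2 + b ^ 2) := by
  have hab : a ^ 2 + b ^ 2 ≠ 0 := by positivity
  have hba : b ^ 2 + a ^ 2 ≠ 0 := by positivity
  rw [wSum, infDist_lineThrough_sq (pt_ne_pt_of_fst_ne _ _ (neg_ne_self.mpr hb)),
    infDist_lineThrough_sq (pt_ne_pt_of_fst_ne _ _ hb),
    infDist_lineThrough_sq (pt_ne_pt_of_fst_ne _ _ (neg_ne_zero.mpr hb).symm)]
  simp only [pt_apply_zero, pt_apply_one, sub_zero, zero_sub, neg_sq, sub_neg_eq_add]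
  field_simp
  ring

/-- **Equation (3.5).** For the isosceles triangle with vertices `(0,a)`, `(−b,0)`, `(b,0)`,
`W(x,y) = k` iff
`x²/(a²+3b²) + (y − 2ab²/(a²+3b²))²/(2a²) = ((a²+b²)k − 2a²b²)/(2a²(a²+3b²)) + 2b⁴/(a²+3b²)²`. -/
theorem stmt_12 (a b : ℝ) (ha : 0 < a) (hb : 0 < b) :
    ∀ (P : EuclideanSpace ℝ (Fin 2)) (k : ℝ),
      wSum (pt 0 a) (pt (-b) 0) (pt b 0) P = k ↔
        (P 0) ^ 2 / (a ^ 2 + 3 * b ^ 2)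
            + (P 1 - 2 * a * b ^ 2 / (a ^ 2 + 3 * b ^ 2)) ^ 2 / (2 * a ^ 2)
          = ((a ^ 2 + b ^ 2) * k - 2 * a ^ 2 * b ^ 2) / (2 * a ^ 2 * (a ^ 2 + 3 * b ^ 2))
              + 2 * b ^ 4 / (a ^ 2 + 3 * b ^ 2) ^ 2 := by
  intro P k
  have hab : a ^ 2 + b ^ 2 ≠ 0 := by positivity
  have hden : 2 * a ^ 2 * (a ^ 2 + 3 * b ^ 2) ≠ 0 := by positivity
  have hellipse : (P 0) ^ 2 / (a ^ 2 + 3 * b ^ 2)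
        + (P 1 - 2 * a * b ^ 2 / (a ^ 2 + 3 * b ^ 2)) ^ 2 / (2 * a ^ 2) =
      ((a ^ 2 + b ^ 2) * wSum (pt 0 a) (pt (-b) 0) (pt b 0) P - 2 * a ^ 2 * b ^ 2)
          / (2 * a ^ 2 * (a ^ 2 + 3 * b ^ 2)) + 2 * b ^ 4 / (a ^ 2 + 3 * b ^ 2) ^ 2 := by
    rw [wSum_isosceles hb.ne']
    field_simp
    ring
  rw [hellipse, add_left_inj, div_left_inj' hden, sub_left_inj, mul_right_inj' hab]
end
end

section
/- Let Δ be the triangle in ℝ² with vertices (0,0), (0,3), (4,0). Then a point P = (x, y) satisfies W(P) = 5 (the sum of the squared distances from P to the three side lines equals 5) if and only if 34x² + 41y² + 24xy − 72x − 96y + 19 = 0. -/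
noncomputable section

lemma infDist_eq_of (P Q : EuclideanSpace ℝ (Fin 2)) (s : Set (EuclideanSpace ℝ (Fin 2)))
    (hQ : Q ∈ s) (h : ∀ R ∈ s, dist P Q ≤ dist P R) : Metric.infDist P s = dist P Q := by
  refine le_antisymm (Metric.infDist_le_dist_of_mem hQ) ?_
  haveI : Nonempty s := ⟨⟨Q, hQ⟩⟩
  rw [Metric.infDist_eq_iInf]
  exact le_ciInf fun R => h R R.2

lemma mem_line (X Y Q : EuclideanSpace ℝ (Fin 2)) (h : Q ∈ lineThrough X Y) :
    ∃ r : ℝ, Q = r • (Y - X) + X := by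
  have h1 : Q -ᵥ X ∈ vectorSpan ℝ ({X, Y} : Set (EuclideanSpace ℝ (Fin 2))) := by
    rw [← direction_affineSpan]
    exact AffineSubspace.vsub_mem_direction h (left_mem_affineSpan_pair ℝ X Y)
  obtain ⟨r, hr⟩ := mem_vectorSpan_pair_rev.1 h1
  simp only [vsub_eq_sub] at hr
  exact ⟨r, by rw [hr]; abel⟩

lemma foot_mem (X Y : EuclideanSpace ℝ (Fin 2)) (t : ℝ) :
    t • (Y - X) + X ∈ lineThrough X Y := by
  have := AffineMap.lineMap_mem_affineSpan_pair (k := ℝ) t X Y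
  simpa [lineThrough, AffineMap.lineMap_apply, vsub_eq_sub, vadd_eq_add] using this

lemma coords (r : ℝ) (X Y : EuclideanSpace ℝ (Fin 2)) (i : Fin 2) :
    (r • (Y - X) + X) i = r * (Y i - X i) + X i := rfl

lemma line_AB (P : EuclideanSpace ℝ (Fin 2)) :
    Metric.infDist P (lineThrough (pt 0 0) (pt 0 3)) = |P 0| := by
  have h : ∀ R ∈ lineThrough (pt 0 0) (pt 0 3),
      dist P ((P 1 / 3 : ℝ) • (pt 0 3 - pt 0 0) + pt 0 0) ≤ dist P R := by
    intro R hR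
    obtain ⟨r, hr⟩ := mem_line _ _ _ hR
    subst hr
    rw [EuclideanSpace.dist_eq, EuclideanSpace.dist_eq]
    apply Real.sqrt_le_sqrt
    simp [Fin.sum_univ_two, coords, pt, Real.dist_eq]
    nlinarith [sq_nonneg (P 1 - r * 3), sq_abs (P 0), sq_abs (P 1 - r * 3),
      sq_abs (P 1 - P 1 / 3 * 3)]
  rw [infDist_eq_of P _ _ (foot_mem _ _ _) h, EuclideanSpace.dist_eq, Fin.sum_univ_two]
  simp [coords, pt, Real.dist_eq, Real.sqrt_sq_eq_abs]

lemma line_CA (P : EuclideanSpace ℝ (Fin 2)) :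
    Metric.infDist P (lineThrough (pt 4 0) (pt 0 0)) = |P 1| := by
  have h : ∀ R ∈ lineThrough (pt 4 0) (pt 0 0),
      dist P (((4 - P 0) / 4 : ℝ) • (pt 0 0 - pt 4 0) + pt 4 0) ≤ dist P R := by
    intro R hR
    obtain ⟨r, hr⟩ := mem_line _ _ _ hR
    subst hr
    rw [EuclideanSpace.dist_eq, EuclideanSpace.dist_eq]
    apply Real.sqrt_le_sqrt
    simp [Fin.sum_univ_two, coords, pt, Real.dist_eq]
    nlinarith [sq_nonneg (P 0 - (4 - r * 4)), sq_abs (P 1),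
      sq_abs (P 0 - (4 - r * 4)), sq_abs (P 0 - ((4 - P 0) / 4 * (-4) + 4))]
  rw [infDist_eq_of P _ _ (foot_mem _ _ _) h, EuclideanSpace.dist_eq, Fin.sum_univ_two]
  have h0 : P 0 - ((4 - P 0) / 4 * (0 - 4) + 4) = 0 := by ring
  simp [coords, pt, Real.dist_eq, Real.sqrt_sq_eq_abs, h0]

lemma line_BC (P : EuclideanSpace ℝ (Fin 2)) :
    Metric.infDist P (lineThrough (pt 0 3) (pt 4 0)) = |3 * P 0 + 4 * P 1 - 12| / 5 := by
  set t : ℝ := (4 * P 0 - 3 * P 1 + 9) / 25 with ht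
  have h : ∀ R ∈ lineThrough (pt 0 3) (pt 4 0),
      dist P (t • (pt 4 0 - pt 0 3) + pt 0 3) ≤ dist P R := by
    intro R hR
    obtain ⟨r, hr⟩ := mem_line _ _ _ hR
    subst hr
    rw [EuclideanSpace.dist_eq, EuclideanSpace.dist_eq]
    apply Real.sqrt_le_sqrt
    simp only [Fin.sum_univ_two, coords, pt, Real.dist_eq, sq_abs]
    simp [ht]
    nlinarith [sq_nonneg (4 * (P 0 - 4 * r) - 3 * (P 1 - 3 + 3 * r))]
  rw [infDist_eq_of P _ _ (foot_mem _ _ _) h, EuclideanSpace.dist_eq, Fin.sum_univ_two]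
  simp only [coords, Real.dist_eq, sq_abs]
  have key : (P 0 - (t * ((pt 4 0) 0 - (pt 0 3) 0) + (pt 0 3) 0)) ^ 2 +
      (P 1 - (t * ((pt 4 0) 1 - (pt 0 3) 1) + (pt 0 3) 1)) ^ 2 =
      ((3 * P 0 + 4 * P 1 - 12) / 5) ^ 2 := by
    show (P 0 - (t * ((4:ℝ) - 0) + 0)) ^ 2 + (P 1 - (t * ((0:ℝ) - 3) + 3)) ^ 2 = _
    rw [ht]; ring
  rw [key, Real.sqrt_sq_eq_abs, abs_div]
  norm_num

/-- For the triangle with vertices `(0,0)`, `(0,3)`, `(4,0)`, the locus of points whose sum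
of squared distances from the three side lines equals `5` is the ellipse
`34x² + 41y² + 24xy − 72x − 96y + 19 = 0`. -/
theorem stmt_19 :
    ∀ P : EuclideanSpace ℝ (Fin 2),
      wSum (pt 0 0) (pt 0 3) (pt 4 0) P = 5 ↔
        34 * (P 0) ^ 2 + 41 * (P 1) ^ 2 + 24 * (P 0) * (P 1)
            - 72 * (P 0) - 96 * (P 1) + 19 = 0 := by
  intro P
  rw [wSum, line_AB, line_CA, line_BC]
  rw [div_pow, sq_abs, sq_abs, sq_abs]
  constructor
  · intro h; nlinarith [h]
  · intro h; nlinarith [h]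
end
end
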